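/- arXiv:2006.13540 — 6 statements merged into one kernel-verified Lean document; each statement's English description precedes it below -/
import Mathlib

section
/- Let n ≥ 2, let ζ ∈ ℂ be a primitive n-th root of unity, s = diag(1, ζ, …, ζ^{n−1}) ∈ GL(n,ℂ), and W ∈ GL(n,ℂ) the cyclic permutation matrix with W·eᵢ = e_{i+1 (mod n)}. Let T̄ ⊆ PGL(n,ℂ) denote the image of the group of invertible diagonal matrices, and let s̄, W̄ denote the images of s, W in PGL(n,ℂ). Then the set of fixed points {t ∈ T̄ : W̄ t W̄⁻¹ = t} is exactly the cyclic subgroup generated by s̄, which has order n. -/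
/-!
Conjugation by the cyclic shift `W` shifts diagonal entries: `diag(d) * W = W * diag(d(· + 1))`.
Hence a diagonal `g = diag(d)` is fixed in `PGL` exactly when `d (i + 1) = u * d i` for a scalar
`u`, i.e. `d i = u ^ i * d 0`; going once around the cycle forces `u ^ n = 1`, so `u = ζ ^ m` and
`g ≡ s ^ m`. The order of `s̄` is that of `ζ`, because `s ^ k` is scalar iff its first two
diagonal entries `1` and `ζ ^ k` agree.
-/

open Matrix MatrixGroups

namespace Matrix

def cyclicShift (n : ℕ) [NeZero n] (R : Type*) [Zero R] [One R] : Matrix (Fin n) (Fin n) R :=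
  of fun i j => if i = j + 1 then 1 else 0

variable {n : ℕ} [NeZero n]

lemma of_val_eq_add_one_mod_eq_cyclicShift (R : Type*) [Zero R] [One R] :
    (of fun i j : Fin n => if (i : ℕ) = ((j : ℕ) + 1) % n then (1 : R) else 0) =
      cyclicShift n R := by
  ext i j
  simp [cyclicShift, Fin.ext_iff, Fin.val_add]

lemma diagonal_mul_cyclicShift {R : Type*} [Semiring R] (d : Fin n → R) :
    diagonal d * cyclicShift n R = cyclicShift n R * diagonal fun i => d (i + 1) := by
  ext i j
  simp only [cyclicShift, diagonal_mul, mul_diagonal, of_apply]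
  split_ifs with h <;> simp [h]

end Matrix

namespace Fin

open Fin.NatCast

variable {n : ℕ} [NeZero n]

lemma apply_natCast_eq_pow_mul {M : Type*} [Monoid M] {f : Fin n → M} {a : M}
    (h : ∀ i, f (i + 1) = a * f i) (k : ℕ) : f k = a ^ k * f 0 := by
  induction k with
  | zero => simp
  | succ k ih => rw [Nat.cast_succ, h, ih, pow_succ', mul_assoc]

lemma exists_apply_eq_pow_mul_of_apply_add_one {K : Type*} [CommRing K] [IsDomain K] {ζ : K}
    (hζ : IsPrimitiveRoot ζ n) {f : Fin n → K} {a : K} (h : ∀ i, f (i + 1) = a * f i)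
    (h0 : f 0 ≠ 0) : ∃ m : ℕ, ∀ i : Fin n, f i = (ζ ^ m) ^ (i : ℕ) * f 0 := by
  have han : a ^ n = 1 := by
    have hcycle := apply_natCast_eq_pow_mul h n
    rw [natCast_self] at hcycle
    exact (mul_eq_right₀ h0).mp hcycle.symm
  obtain ⟨m, -, rfl⟩ := hζ.eq_pow_of_pow_eq_one han
  exact ⟨m, fun i => by simpa using apply_natCast_eq_pow_mul h i⟩

lemma pow_val_add_one {M : Type*} [Monoid M] {ζ : M} (hζ : ζ ^ n = 1) (i : Fin n) :
    ζ ^ (i + 1).val = ζ * ζ ^ i.val := by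
  have hi : i + 1 = ((i.val + 1 : ℕ) : Fin n) := by simp
  rw [hi, val_natCast, ← pow_eq_pow_mod _ hζ, pow_succ']

end Fin

namespace Matrix.ProjGenLinGroup

variable {K : Type*} [CommRing K]

lemma mk_eq_one_iff_of_val_eq_diagonal {ι : Type*} [Fintype ι] [DecidableEq ι] {g : GL ι K}
    {d : ι → K} (hg : (g : Matrix ι ι K) = diagonal d) :
    mk g = 1 ↔ ∃ c, ∀ i, d i = c := by
  rw [mk_eq_one, GeneralLinearGroup.mem_center_iff_val_mem_range_scalar, hg]
  simp [scalar_apply, diagonal_injective.eq_iff, funext_iff, eq_comm]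

lemma mk_conj_eq_iff_of_val_eq_cyclicShift {n : ℕ} [NeZero n] {W g : GL (Fin n) K}
    {d : Fin n → K}
    (hW : (W : Matrix (Fin n) (Fin n) K) = cyclicShift n K)
    (hg : (g : Matrix (Fin n) (Fin n) K) = diagonal d) :
    mk W * mk g * (mk W)⁻¹ = mk g ↔ ∃ u : Kˣ, ∀ i, d (i + 1) = u * d i := by
  have hconj (u : Kˣ) : W * g * W⁻¹ * GeneralLinearGroup.scalar (Fin n) u = g ↔
      W * (g * GeneralLinearGroup.scalar (Fin n) u) = g * W := by
    have hW_comm : W * g * W⁻¹ * GeneralLinearGroup.scalar (Fin n) u * W =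
        W * (g * GeneralLinearGroup.scalar (Fin n) u) := by
      rw [mul_assoc _ _ W, GeneralLinearGroup.scalar_commute]
      group
    rw [← mul_left_inj W, hW_comm]
  have hshift : (g * W : Matrix (Fin n) (Fin n) K) = W * diagonal fun i => d (i + 1) := by
    rw [hg, hW, diagonal_mul_cyclicShift]
  rw [← map_inv, ← map_mul, ← map_mul, mk_eq_mk_iff]
  simp_rw [hconj, Units.ext_iff, Units.val_mul, hshift, Units.mul_right_inj,
    GeneralLinearGroup.coe_scalar, hg, scalar_apply, diagonal_mul_diagonal,
    diagonal_injective.eq_iff, funext_iff, mul_comm, eq_comm]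

lemma mk_conj_eq_self_of_pow_eq_one {n : ℕ} [NeZero n] {ζ : K} (hζ : ζ ^ n = 1)
    {S W : GL (Fin n) K}
    (hS : (S : Matrix (Fin n) (Fin n) K) = diagonal fun i : Fin n => ζ ^ (i : ℕ))
    (hW : (W : Matrix (Fin n) (Fin n) K) = cyclicShift n K) :
    mk W * mk S * (mk W)⁻¹ = mk S :=
  (mk_conj_eq_iff_of_val_eq_cyclicShift hW hS).mpr
    ⟨(IsUnit.of_pow_eq_one hζ (NeZero.ne n)).unit, Fin.pow_val_add_one hζ⟩

lemma exists_mk_pow_eq_of_mk_conj_eq [IsDomain K] {n : ℕ} [NeZero n] {ζ : K}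
    (hζ : IsPrimitiveRoot ζ n) {S W g : GL (Fin n) K}
    (hS : (S : Matrix (Fin n) (Fin n) K) = diagonal fun i : Fin n => ζ ^ (i : ℕ))
    (hW : (W : Matrix (Fin n) (Fin n) K) = cyclicShift n K)
    (hg : (g : Matrix (Fin n) (Fin n) K).IsDiag)
    (hfix : mk W * mk g * (mk W)⁻¹ = mk g) : ∃ m : ℕ, mk S ^ m = mk g := by
  set d := (g : Matrix (Fin n) (Fin n) K).diag
  have hgd : (g : Matrix (Fin n) (Fin n) K) = diagonal d := hg.diagonal_diag.symm
  have hd : IsUnit d := isUnit_diagonal.mp (hgd ▸ g.isUnit)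
  obtain ⟨u, hu⟩ := (mk_conj_eq_iff_of_val_eq_cyclicShift hW hgd).mp hfix
  have hd0 : IsUnit (d 0) := Pi.isUnit_iff.mp hd 0
  obtain ⟨m, hm⟩ := Fin.exists_apply_eq_pow_mul_of_apply_add_one hζ hu hd0.ne_zero
  refine ⟨m, ?_⟩
  rw [← map_pow, mk_eq_mk_iff]
  refine ⟨hd0.unit, Units.ext ?_⟩
  rw [Units.val_mul, Units.val_pow_eq_pow_val, GeneralLinearGroup.coe_scalar, hS, hgd,
    diagonal_pow, scalar_apply, diagonal_mul_diagonal]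
  congr 1
  funext i
  rw [IsUnit.unit_spec, Pi.pow_apply, pow_right_comm, ← hm]

lemma orderOf_mk_eq_of_isPrimitiveRoot [IsDomain K] {n : ℕ} (hn : 2 ≤ n) {ζ : K}
    (hζ : IsPrimitiveRoot ζ n) {S : GL (Fin n) K}
    (hS : (S : Matrix (Fin n) (Fin n) K) = diagonal fun i : Fin n => ζ ^ (i : ℕ)) :
    orderOf (mk S) = n := by
  refine (orderOf_eq_orderOf_iff.mpr fun k => ?_).trans hζ.eq_orderOf.symm
  have hSk : ((S ^ k : GL (Fin n) K) : Matrix (Fin n) (Fin n) K) =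
      diagonal ((fun i : Fin n => ζ ^ (i : ℕ)) ^ k) := by
    rw [Units.val_pow_eq_pow_val, hS, diagonal_pow]
  rw [← map_pow, mk_eq_one_iff_of_val_eq_diagonal hSk]
  constructor
  · rintro ⟨c, hc⟩
    have h0 := hc ⟨0, by omega⟩
    have h1 := hc ⟨1, hn⟩
    simp only [Pi.pow_apply, pow_zero, pow_one, one_pow] at h0 h1
    rw [h1, ← h0]
  · intro h
    exact ⟨1, fun i => by rw [Pi.pow_apply, pow_right_comm, h, one_pow]⟩

end Matrix.ProjGenLinGroup

open Matrix.ProjGenLinGroup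

/-- With `s = diag(1, ζ, …, ζ^{n−1})` and `W` the cyclic permutation matrix
in `GL(n,ℂ)` (`ζ` a primitive `n`-th root of unity, `n ≥ 2`), and `T̄` the image in
`PGL(n,ℂ) = GL(n,ℂ)/center` of the invertible diagonal matrices, the fixed points of
conjugation by `W̄` on `T̄` form exactly the cyclic subgroup generated by `s̄`,
which has order `n`. -/
theorem stmt_1 (n : ℕ) (hn : 2 ≤ n) (ζ : ℂ) (hζ : IsPrimitiveRoot ζ n)
    (S W : Matrix.GeneralLinearGroup (Fin n) ℂ)
    (hS : (S : Matrix (Fin n) (Fin n) ℂ) = Matrix.diagonal fun i : Fin n => ζ ^ (i : ℕ))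
    (hW : (W : Matrix (Fin n) (Fin n) ℂ) =
      Matrix.of fun i j : Fin n => if (i : ℕ) = ((j : ℕ) + 1) % n then (1 : ℂ) else 0) :
    let PGL := Matrix.GeneralLinearGroup (Fin n) ℂ ⧸
      Subgroup.center (Matrix.GeneralLinearGroup (Fin n) ℂ)
    let sbar : PGL := QuotientGroup.mk S
    let Wbar : PGL := QuotientGroup.mk W
    let Tbar : Set PGL := QuotientGroup.mk ''
      {g : Matrix.GeneralLinearGroup (Fin n) ℂ | ((g : Matrix (Fin n) (Fin n) ℂ)).IsDiag}
    ({t : PGL | t ∈ Tbar ∧ Wbar * t * Wbar⁻¹ = t} = (Subgroup.zpowers sbar : Set PGL)) ∧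
    orderOf sbar = n := by
  show {t : PGL(n, ℂ) | t ∈ mk '' {g | (g : Matrix (Fin n) (Fin n) ℂ).IsDiag} ∧
      mk W * t * (mk W)⁻¹ = t} = (Subgroup.zpowers (mk S) : Set PGL(n, ℂ)) ∧
    orderOf (mk S) = n
  have : NeZero n := ⟨by omega⟩
  rw [of_val_eq_add_one_mod_eq_cyclicShift] at hW
  have horder : orderOf (mk S) = n := orderOf_mk_eq_of_isPrimitiveRoot hn hζ hS
  have hfix : mk W * mk S * (mk W)⁻¹ = mk S :=
    mk_conj_eq_self_of_pow_eq_one hζ.pow_eq_one hS hW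
  refine ⟨Set.ext fun t => ⟨?_, fun ht => ?_⟩, horder⟩
  · rintro ⟨⟨g, hg, rfl⟩, hgfix⟩
    obtain ⟨m, hm⟩ := exists_mk_pow_eq_of_mk_conj_eq hζ hS hW hg hgfix
    exact hm ▸ pow_mem (Subgroup.mem_zpowers (mk S)) m
  · have hfin : IsOfFinOrder (mk S) := orderOf_pos_iff.mp (by omega)
    obtain ⟨m, rfl⟩ := hfin.mem_powers_iff_mem_zpowers.mpr ht
    refine ⟨⟨S ^ m, ?_, map_pow mk S m⟩, by rw [← conj_pow, hfix]⟩
    rw [Set.mem_ofPred_eq, Units.val_pow_eq_pow_val, hS, diagonal_pow]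
    exact isDiag_diagonal _
end

section
/- Let n ≥ 2, let ζ ∈ ℂ be a primitive n-th root of unity, s = diag(1, ζ, …, ζ^{n−1}) ∈ GL(n,ℂ), and W ∈ GL(n,ℂ) the cyclic permutation matrix with W·eᵢ = e_{i+1 (mod n)}. Let s̄, W̄ denote the images of s, W in PGL(n,ℂ). Then the common centralizer {g ∈ PGL(n,ℂ) : g s̄ g⁻¹ = s̄ and g W̄ g⁻¹ = W̄} equals the subgroup generated by s̄ and W̄; in particular it is a finite abelian group of order n². -/
/-!
A lift `G` of an element of the centralizer satisfies `G S G⁻¹ = c S` and `G W G⁻¹ = e W` for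
scalars `c, e`, which are `n`-th roots of unity by taking determinants. Since `W⁻¹ S W = ζ S`,
multiplying `G` by a suitable power of `W⁻¹` makes it commute with `S`; as the eigenvalues of `S`
are distinct it is then diagonal, and a diagonal `D` with `D W D⁻¹ = e W` is a scalar multiple of a
power of `S`. Hence the centralizer consists of the `s̄ ^ a * W̄ ^ b` with `a, b < n`, which lie in
the subgroup generated by the commuting `s̄, W̄`; these `n²` elements are distinct, as the supports
and then the diagonals of the matrices `s ^ a * W ^ b` show.
-/

open Matrix

variable {R : Type*}

def clockMatrix [Semiring R] (n : ℕ) (ζ : R) : Matrix (Fin n) (Fin n) R :=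
  diagonal fun i => ζ ^ (i : ℕ)

variable (R) in
def shiftMatrix [Zero R] [One R] (n : ℕ) : Matrix (Fin n) (Fin n) R :=
  of fun i j => if (i : ℕ) = ((j : ℕ) + 1) % n then 1 else 0

variable {n : ℕ}

section CommSemiring

variable [CommSemiring R]

lemma clockMatrix_pow (ζ : R) (a : ℕ) : clockMatrix n ζ ^ a = clockMatrix n (ζ ^ a) := by
  simp only [clockMatrix, diagonal_pow]
  congr 1
  ext i
  simp only [Pi.pow_apply, ← pow_mul, mul_comm]

lemma shiftMatrix_pow_apply (b : ℕ) (i j : Fin n) :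
    (shiftMatrix R n ^ b) i j = if (i : ℕ) = ((j : ℕ) + b) % n then 1 else 0 := by
  induction b generalizing i with
  | zero => simp [one_apply, Fin.ext_iff, Nat.mod_eq_of_lt j.isLt]
  | succ b ih =>
    have hn : 0 < n := j.pos
    rw [pow_succ', mul_apply, Finset.sum_eq_single ⟨((j : ℕ) + b) % n, Nat.mod_lt _ hn⟩]
    · rw [ih, if_pos rfl, mul_one]
      simp only [shiftMatrix, of_apply, Nat.mod_add_mod, add_assoc]
    · intro k _ hk
      rw [ih, if_neg (fun h => hk (Fin.ext h)), mul_zero]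
    · simp

lemma clockMatrix_mul_shiftMatrix_pow_apply (ζ : R) (b : ℕ) (i j : Fin n) :
    (clockMatrix n ζ * shiftMatrix R n ^ b) i j
      = if (i : ℕ) = ((j : ℕ) + b) % n then ζ ^ (i : ℕ) else 0 := by
  rw [clockMatrix, diagonal_mul, shiftMatrix_pow_apply, mul_ite, mul_one, mul_zero]

lemma clockMatrix_mul_shiftMatrix {ζ : R} (hζ : ζ ^ n = 1) :
    clockMatrix n ζ * shiftMatrix R n = ζ • (shiftMatrix R n * clockMatrix n ζ) := by
  ext i j
  simp only [clockMatrix, shiftMatrix, diagonal_mul, mul_diagonal, Matrix.smul_apply, of_apply,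
    smul_eq_mul]
  split_ifs with h
  · rw [h, ← pow_eq_pow_mod _ hζ, pow_succ']
    ring
  · simp

lemma diagonal_eq_smul_clockMatrix [NeZero n] {d : Fin n → R} {e : R}
    (h : diagonal d * shiftMatrix R n = e • (shiftMatrix R n * diagonal d)) :
    diagonal d = d 0 • clockMatrix n e := by
  have hstep : ∀ m (hm : m + 1 < n), d ⟨m + 1, hm⟩ = e * d ⟨m, by omega⟩ := by
    intro m hm
    have := congr_fun₂ h ⟨m + 1, hm⟩ ⟨m, by omega⟩
    simpa [shiftMatrix, diagonal_mul, mul_diagonal, Nat.mod_eq_of_lt hm] using this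
  have hd : ∀ m (hm : m < n), d ⟨m, hm⟩ = e ^ m * d 0 := by
    intro m hm
    induction m with
    | zero => simp
    | succ m ih => rw [hstep m hm, ih (by omega), pow_succ']; ring
  rw [clockMatrix, smul_eq_diagonal_mul, diagonal_mul_diagonal]
  congr 1
  ext i
  rw [hd i i.isLt, mul_comm]

end CommSemiring

lemma Matrix.eq_diagonal_of_commute_diagonal {ι : Type*} [Fintype ι] [DecidableEq ι]
    [CommRing R] [NoZeroDivisors R] {d : ι → R} (hd : Function.Injective d) {A : Matrix ι ι R}
    (h : A * diagonal d = diagonal d * A) : A = diagonal fun i => A i i := by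
  ext i j
  rcases eq_or_ne i j with rfl | hij
  · simp
  · have := congr_fun₂ h i j
    rw [mul_diagonal, diagonal_mul] at this
    rw [diagonal_apply_ne _ hij]
    have : A i j * (d j - d i) = 0 := by linear_combination this
    exact (mul_eq_zero.mp this).resolve_right (sub_ne_zero.mpr (hd.ne hij.symm))

section GroupLemmas

variable {G : Type*} [Group G]

lemma conj_pow_eq_of_conj_eq_central_mul {w s z : G} (hz : z ∈ Subgroup.center G)
    (h : w * s * w⁻¹ = z * s) (b : ℕ) : w ^ b * s * (w ^ b)⁻¹ = z ^ b * s := by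
  induction b with
  | zero => simp
  | succ b ih =>
    calc w ^ (b + 1) * s * (w ^ (b + 1))⁻¹ = w * (w ^ b * s * (w ^ b)⁻¹) * w⁻¹ := by group
      _ = z ^ b * (w * s * w⁻¹) := by
        rw [ih, ← mul_assoc, Subgroup.mem_center_iff.mp (pow_mem hz b) w]; group
      _ = z ^ (b + 1) * s := by rw [h, pow_succ, mul_assoc]

lemma Subgroup.coe_centralizer_pair (x y : G) :
    (Subgroup.centralizer {x, y} : Set G) = {g | g * x * g⁻¹ = x ∧ g * y * g⁻¹ = y} := by
  ext g
  simp only [SetLike.mem_coe, Subgroup.mem_centralizer_iff, Set.mem_insert_iff,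
    Set.mem_singleton_iff, forall_eq_or_imp, forall_eq, Set.mem_ofPred_eq, mul_inv_eq_iff_eq_mul]
  exact ⟨fun h => ⟨h.1.symm, h.2.symm⟩, fun h => ⟨h.1.symm, h.2.symm⟩⟩

lemma Commute.closure_pair_le_centralizer {x y : G} (h : Commute x y) :
    Subgroup.closure {x, y} ≤ Subgroup.centralizer {x, y} := by
  rw [Subgroup.closure_le, Subgroup.coe_centralizer_pair]
  rintro z (rfl | rfl)
  exacts [⟨by group, mul_inv_eq_of_eq_mul h.eq⟩, ⟨mul_inv_eq_of_eq_mul h.eq.symm, by group⟩]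

end GroupLemmas

namespace Matrix.GeneralLinearGroup

variable {ι : Type*} [Fintype ι] [DecidableEq ι] [CommRing R]

lemma mk_eq_mk_iff_exists_scalar {u v : GL ι R} :
    (u : GL ι R ⧸ Subgroup.center (GL ι R)) = v ↔ ∃ c : Rˣ, v = scalar ι c * u := by
  rw [QuotientGroup.eq, center_eq_range_scalar]
  constructor
  · rintro ⟨c, hc⟩
    exact ⟨c, by rw [scalar_commute, hc, mul_inv_cancel_left]⟩
  · rintro ⟨c, rfl⟩
    exact ⟨c, by rw [scalar_commute, inv_mul_cancel_left]⟩

lemma mk_eq_mk_of_val_eq_smul {u v : GL ι R} (c : R) (h : (v : Matrix ι ι R) = c • u) :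
    (u : GL ι R ⧸ Subgroup.center (GL ι R)) = v := by
  refine QuotientGroup.eq.mpr (mem_center_iff_val_mem_range_scalar.mpr ⟨c, ?_⟩)
  rw [Units.val_mul, h, Matrix.mul_smul, ← Units.val_mul, inv_mul_cancel, Units.val_one,
    smul_one_eq_diagonal, scalar_apply]

lemma exists_conj_eq_scalar_mul {g v : GL ι R}
    (h : (g : GL ι R ⧸ Subgroup.center (GL ι R)) * v * (g : GL ι R ⧸ Subgroup.center (GL ι R))⁻¹
      = v) :
    ∃ c : Rˣ, g * v * g⁻¹ = scalar ι c * v := by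
  rwa [← QuotientGroup.mk_inv, ← QuotientGroup.mk_mul, ← QuotientGroup.mk_mul, eq_comm,
    mk_eq_mk_iff_exists_scalar] at h

lemma pow_card_eq_one_of_conj_eq_scalar_mul {g v : GL ι R} {c : Rˣ}
    (h : g * v * g⁻¹ = scalar ι c * v) : c ^ Fintype.card ι = 1 := by
  have hdet := congr_arg det h
  rw [map_mul, map_mul, map_inv, map_mul, det_scalar, mul_inv_cancel_comm] at hdet
  exact mul_eq_right.mp hdet.symm

end Matrix.GeneralLinearGroup

section ClockShift

open Matrix.GeneralLinearGroup

variable {K : Type*} [Field K] [NeZero n] {ζ : K} {S W : GL (Fin n) K}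

local notation "PGL" => GL (Fin n) K ⧸ Subgroup.center (GL (Fin n) K)

lemma clock_mul_shift_eq_scalar_mul (hζ : IsPrimitiveRoot ζ n)
    (hS : (S : Matrix (Fin n) (Fin n) K) = clockMatrix n ζ)
    (hW : (W : Matrix (Fin n) (Fin n) K) = shiftMatrix K n) :
    S * W = scalar (Fin n) ((hζ.isUnit (NeZero.ne n)).unit) * (W * S) := by
  ext : 1
  simp only [Units.val_mul, coe_scalar, IsUnit.unit_spec, scalar_apply, ← smul_eq_diagonal_mul,
    hS, hW]
  exact clockMatrix_mul_shiftMatrix hζ.pow_eq_one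

lemma commute_mk_clock_mk_shift (hζ : IsPrimitiveRoot ζ n)
    (hS : (S : Matrix (Fin n) (Fin n) K) = clockMatrix n ζ)
    (hW : (W : Matrix (Fin n) (Fin n) K) = shiftMatrix K n) :
    Commute (S : PGL) W := by
  change ((S * W : GL (Fin n) K) : PGL) = (W * S : GL (Fin n) K)
  exact (mk_eq_mk_iff_exists_scalar.mpr ⟨_, clock_mul_shift_eq_scalar_mul hζ hS hW⟩).symm

lemma exists_mk_eq_clock_pow_of_commute (hζ : IsPrimitiveRoot ζ n)
    (hS : (S : Matrix (Fin n) (Fin n) K) = clockMatrix n ζ)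
    (hW : (W : Matrix (Fin n) (Fin n) K) = shiftMatrix K n) {H : GL (Fin n) K} {e : Kˣ}
    (hHS : H * S = S * H) (hHW : H * W * H⁻¹ = scalar (Fin n) e * W) :
    ∃ a < n, (H : PGL) = (S : PGL) ^ a := by
  have hdiag : (H : Matrix (Fin n) (Fin n) K) = diagonal fun i => H i i :=
    eq_diagonal_of_commute_diagonal (fun i j h => Fin.ext (hζ.pow_inj i.isLt j.isLt h))
      (by simpa only [Units.val_mul, hS, clockMatrix] using congr_arg Units.val hHS)
  have hen : (e : K) ^ n = 1 := by
    simpa using congr_arg Units.val (pow_card_eq_one_of_conj_eq_scalar_mul hHW)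
  obtain ⟨a, ha, hae⟩ := hζ.eq_pow_of_pow_eq_one hen
  have hHW' : (H : Matrix (Fin n) (Fin n) K) * shiftMatrix K n
      = (e : K) • (shiftMatrix K n * H) := by
    rw [← hW, smul_eq_diagonal_mul, ← scalar_apply, ← coe_scalar, ← Units.val_mul,
      ← Units.val_mul, ← Units.val_mul, ← mul_assoc, ← hHW, inv_mul_cancel_right]
  rw [hdiag] at hHW'
  have hH := diagonal_eq_smul_clockMatrix hHW'
  rw [← hdiag, ← hae, ← clockMatrix_pow, ← hS, ← Units.val_pow_eq_pow_val] at hH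
  exact ⟨a, ha, by rw [← QuotientGroup.mk_pow]; exact (mk_eq_mk_of_val_eq_smul _ hH).symm⟩

lemma exists_clock_pow_mul_shift_pow_eq_of_conj_eq (hζ : IsPrimitiveRoot ζ n)
    (hS : (S : Matrix (Fin n) (Fin n) K) = clockMatrix n ζ)
    (hW : (W : Matrix (Fin n) (Fin n) K) = shiftMatrix K n) {g : PGL}
    (hgS : g * S * g⁻¹ = S) (hgW : g * W * g⁻¹ = W) :
    ∃ a < n, ∃ b < n, (S : PGL) ^ a * (W : PGL) ^ b = g := by
  obtain ⟨G, rfl⟩ := QuotientGroup.mk_surjective g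
  obtain ⟨c, hc⟩ := exists_conj_eq_scalar_mul hgS
  obtain ⟨e, he⟩ := exists_conj_eq_scalar_mul hgW
  have hcn : ((c⁻¹ : Kˣ) : K) ^ n = 1 := by
    simpa [inv_pow] using congr_arg Units.val (pow_card_eq_one_of_conj_eq_scalar_mul hc)
  obtain ⟨b, hb, hbc⟩ := hζ.eq_pow_of_pow_eq_one hcn
  set u := (hζ.isUnit (NeZero.ne n)).unit
  have hz : scalar (Fin n) u ∈ Subgroup.center (GL (Fin n) K) := by
    rw [center_eq_range_scalar]; exact ⟨u, rfl⟩
  have hzc : scalar (Fin n) u ^ b * scalar (Fin n) c = 1 := by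
    rw [← map_pow, ← map_mul, show u ^ b * c = 1 from Units.ext (by simp [u, hbc]), map_one]
  have hWS : W⁻¹ * S * W⁻¹⁻¹ = scalar (Fin n) u * S := by
    rw [inv_inv, mul_assoc, clock_mul_shift_eq_scalar_mul hζ hS hW, ← mul_assoc,
      ← GeneralLinearGroup.scalar_commute, mul_assoc, inv_mul_cancel_left]
  -- conjugating by `W⁻¹ ^ b` multiplies `S` by `ζ ^ b = c⁻¹`, undoing the conjugation by `G`
  have hHS : (G * W⁻¹ ^ b) * S * (G * W⁻¹ ^ b)⁻¹ = S :=
    calc (G * W⁻¹ ^ b) * S * (G * W⁻¹ ^ b)⁻¹ = G * (W⁻¹ ^ b * S * (W⁻¹ ^ b)⁻¹) * G⁻¹ := by group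
      _ = scalar (Fin n) u ^ b * (G * S * G⁻¹) := by
        rw [conj_pow_eq_of_conj_eq_central_mul hz hWS, ← mul_assoc G,
          Subgroup.mem_center_iff.mp (pow_mem hz b) G]
        group
      _ = S := by rw [hc, ← mul_assoc, hzc, one_mul]
  have hHW : (G * W⁻¹ ^ b) * W * (G * W⁻¹ ^ b)⁻¹ = scalar (Fin n) e * W :=
    calc (G * W⁻¹ ^ b) * W * (G * W⁻¹ ^ b)⁻¹ = G * (W⁻¹ ^ b * W * (W⁻¹ ^ b)⁻¹) * G⁻¹ := by group
      _ = scalar (Fin n) e * W := by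
        rw [((Commute.refl W).inv_left.pow_left b).eq, mul_inv_cancel_right, he]
  obtain ⟨a, ha, hHa⟩ :=
    exists_mk_eq_clock_pow_of_commute hζ hS hW (mul_inv_eq_iff_eq_mul.mp hHS) hHW
  refine ⟨a, ha, b, hb, ?_⟩
  rw [← hHa, ← QuotientGroup.mk_pow, ← QuotientGroup.mk_mul, inv_pow, inv_mul_cancel_right]

lemma clock_pow_mul_shift_pow_injective (hζ : IsPrimitiveRoot ζ n)
    (hS : (S : Matrix (Fin n) (Fin n) K) = clockMatrix n ζ)
    (hW : (W : Matrix (Fin n) (Fin n) K) = shiftMatrix K n) :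
    Function.Injective fun p : Fin n × Fin n => (S : PGL) ^ (p.1 : ℕ) * (W : PGL) ^ (p.2 : ℕ) := by
  rintro ⟨a, b⟩ ⟨c, d⟩ h
  simp only [← QuotientGroup.mk_pow, ← QuotientGroup.mk_mul] at h
  obtain ⟨l, hl⟩ := mk_eq_mk_iff_exists_scalar.mp h
  have hval : clockMatrix n (ζ ^ (c : ℕ)) * shiftMatrix K n ^ (d : ℕ)
      = (l : K) • (clockMatrix n (ζ ^ (a : ℕ)) * shiftMatrix K n ^ (b : ℕ)) := by
    simpa only [Units.val_mul, Units.val_pow_eq_pow_val, hS, hW, clockMatrix_pow, coe_scalar,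
      scalar_apply, ← smul_eq_diagonal_mul] using congr_arg Units.val hl
  have hbd : b = d := by
    have hentry := congr_fun₂ hval b 0
    simp only [Matrix.smul_apply, clockMatrix_mul_shiftMatrix_pow_apply, Fin.val_zero, zero_add,
      Nat.mod_eq_of_lt b.isLt, Nat.mod_eq_of_lt d.isLt, if_pos, smul_eq_mul] at hentry
    by_contra hne
    rw [if_neg (Fin.val_ne_of_ne hne)] at hentry
    exact mul_ne_zero l.ne_zero (pow_ne_zero _ (pow_ne_zero _ (hζ.ne_zero (NeZero.ne n))))
      hentry.symm
  subst hbd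
  have hSa : S ^ (c : ℕ) = scalar (Fin n) l * S ^ (a : ℕ) :=
    mul_right_cancel (b := W ^ (b : ℕ)) (by rw [hl, mul_assoc])
  have hdiag : ∀ i : Fin n, (ζ ^ (c : ℕ)) ^ (i : ℕ) = l * (ζ ^ (a : ℕ)) ^ (i : ℕ) := by
    intro i
    have hval' : clockMatrix n (ζ ^ (c : ℕ)) = (l : K) • clockMatrix n (ζ ^ (a : ℕ)) := by
      simpa only [Units.val_mul, Units.val_pow_eq_pow_val, hS, clockMatrix_pow, coe_scalar,
        scalar_apply, ← smul_eq_diagonal_mul] using congr_arg Units.val hSa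
    simpa [clockMatrix] using congr_fun₂ hval' i i
  have hl : (l : K) = 1 := by simpa using (hdiag 0).symm
  refine Prod.ext ?_ rfl
  rcases lt_or_ge 1 n with hn | hn
  · have hζac := hdiag ⟨1, hn⟩
    simp only [hl, one_mul, pow_one] at hζac
    exact Fin.ext (hζ.pow_inj a.isLt c.isLt hζac.symm)
  · exact Fin.ext (by omega)

end ClockShift

/-- With `s̄, W̄` the images in `PGL(n,ℂ) = GL(n,ℂ)/center` of
`s = diag(1, ζ, …, ζ^{n−1})` and the cyclic permutation matrix `W` (`ζ` a primitive
`n`-th root of unity, `n ≥ 2`), the common centralizer of `s̄` and `W̄` in `PGL(n,ℂ)`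
is exactly the subgroup generated by `s̄` and `W̄`; it is abelian of order `n²`. -/
theorem stmt_2 (n : ℕ) (hn : 2 ≤ n) (ζ : ℂ) (hζ : IsPrimitiveRoot ζ n)
    (S W : Matrix.GeneralLinearGroup (Fin n) ℂ)
    (hS : (S : Matrix (Fin n) (Fin n) ℂ) = Matrix.diagonal fun i : Fin n => ζ ^ (i : ℕ))
    (hW : (W : Matrix (Fin n) (Fin n) ℂ) =
      Matrix.of fun i j : Fin n => if (i : ℕ) = ((j : ℕ) + 1) % n then (1 : ℂ) else 0) :
    let PGL := Matrix.GeneralLinearGroup (Fin n) ℂ ⧸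
      Subgroup.center (Matrix.GeneralLinearGroup (Fin n) ℂ)
    let sbar : PGL := QuotientGroup.mk S
    let Wbar : PGL := QuotientGroup.mk W
    ({g : PGL | g * sbar * g⁻¹ = sbar ∧ g * Wbar * g⁻¹ = Wbar}
        = (Subgroup.closure {sbar, Wbar} : Set PGL)) ∧
    Nat.card (Subgroup.closure {sbar, Wbar} : Subgroup PGL) = n ^ 2 ∧
    (∀ a ∈ Subgroup.closure {sbar, Wbar}, ∀ b ∈ Subgroup.closure {sbar, Wbar},
      a * b = b * a) := by
  intro PGL sbar Wbar
  have : NeZero n := ⟨by omega⟩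
  let f : Fin n × Fin n → PGL := fun p => sbar ^ (p.1 : ℕ) * Wbar ^ (p.2 : ℕ)
  have hf : Set.range f ⊆ Subgroup.closure {sbar, Wbar} := by
    rintro _ ⟨p, rfl⟩
    exact mul_mem (pow_mem (Subgroup.subset_closure (by simp)) _)
      (pow_mem (Subgroup.subset_closure (by simp)) _)
  have hcent : (Subgroup.centralizer {sbar, Wbar} : Set PGL) ⊆ Set.range f := by
    intro g hg
    rw [Subgroup.coe_centralizer_pair] at hg
    obtain ⟨a, ha, b, hb, rfl⟩ := exists_clock_pow_mul_shift_pow_eq_of_conj_eq hζ hS hW hg.1 hg.2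
    exact ⟨(⟨a, ha⟩, ⟨b, hb⟩), rfl⟩
  have hclosure := (commute_mk_clock_mk_shift hζ hS hW).closure_pair_le_centralizer
  have hclosure_eq :
      (Subgroup.closure {sbar, Wbar} : Set PGL) = Subgroup.centralizer {sbar, Wbar} :=
    subset_antisymm hclosure (hcent.trans hf)
  refine ⟨by rw [hclosure_eq, Subgroup.coe_centralizer_pair], ?_, fun a ha b hb => ?_⟩
  · rw [← SetLike.coe_sort_coe, subset_antisymm (hclosure_eq ▸ hcent) hf,
      Nat.card_range_of_injective (clock_pow_mul_shift_pow_injective hζ hS hW)]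
    simp [sq]
  · rw [← Subgroup.centralizer_closure] at hclosure
    exact Subgroup.mem_centralizer_iff.mp (hclosure hb) a ha
end

section
/- Let δ = diag(1,−1) ∈ O(2,ℂ). Suppose s, h ∈ O(2,ℂ) satisfy sh = hs and the common centralizer {g ∈ O(2,ℂ) : gs = sg and gh = hg} is finite. Then there exists g ∈ O(2,ℂ) with (g s g⁻¹, g h g⁻¹) equal to exactly one of the six pairs (I,δ), (−I,δ), (δ,I), (δ,−I), (δ,δ), (δ,−δ); moreover these six pairs lie in pairwise distinct orbits of the simultaneous conjugation action of O(2,ℂ) on pairs. -/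
/-!
Every element of `O(2, ℂ)` is a rotation `!![a, b; -b, a]` or a reflection `!![a, b; b, -a]`
with `a² + b² = 1`. Rotations commute with each other, so if `s` and `h` were both rotations,
their common centralizer would contain all rotations and be infinite. A rotation commuting with a
reflection is `±I`, and two commuting reflections agree up to sign; as every reflection is
conjugate to `δ` by a rotation, `(s, h)` is conjugate to one of the six pairs. The triple
`(tr s, tr h, tr sh)` is invariant under simultaneous conjugation and takes the six distinct values
`(±2, 0, 0)`, `(0, ±2, 0)`, `(0, 0, ±2)` on these pairs, which separates their orbits.
-/

open Matrix

namespace OrthogonalFinTwo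

theorem fin_two_matrix_eq_iff {α : Type*} {a b c d a' b' c' d' : α} :
    !![a, b; c, d] = !![a', b'; c', d'] ↔ (a = a' ∧ b = b') ∧ c = c' ∧ d = d' := by
  simp only [EmbeddingLike.apply_eq_iff_eq, vecCons_inj, and_true]

section CommRing

variable {R : Type*} [CommRing R]

def rotationMatrix (a b : R) : Matrix (Fin 2) (Fin 2) R := !![a, b; -b, a]

def reflectionMatrix (a b : R) : Matrix (Fin 2) (Fin 2) R := !![a, b; b, -a]

theorem rotationMatrix_mem_orthogonalGroup {a b : R} (hab : a ^ 2 + b ^ 2 = 1) :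
    rotationMatrix a b ∈ orthogonalGroup (Fin 2) R :=
  (of_mem_specialOrthogonalGroup_fin_two_iff.2 ⟨rfl, (neg_neg b).symm, hab⟩).1

theorem rotationMatrix_mul_comm (a b c d : R) :
    rotationMatrix a b * rotationMatrix c d = rotationMatrix c d * rotationMatrix a b := by
  rw [rotationMatrix, rotationMatrix, mul_fin_two, mul_fin_two, fin_two_matrix_eq_iff]
  refine ⟨⟨?_, ?_⟩, ?_, ?_⟩ <;> ring

-- Half-angle formulas: if `(a, b) = (cos θ, sin θ)` then `(e, f) = (cos (θ/2), sin (θ/2))`.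
theorem rotationMatrix_mul_reflectionMatrix_eq_diagonal {a b e f : R}
    (he : 2 * e ^ 2 = 1 + a) (hf : 2 * f ^ 2 = 1 - a) (hef : 2 * e * f = b) :
    rotationMatrix e f * reflectionMatrix a b = diagonal ![1, -1] * rotationMatrix e f := by
  subst hef
  rw [diagonal_vec2, rotationMatrix, reflectionMatrix, mul_fin_two, mul_fin_two,
    fin_two_matrix_eq_iff]
  refine ⟨⟨?_, ?_⟩, ?_, ?_⟩
  · linear_combination e * hf
  · linear_combination f * he
  · linear_combination f * he
  · linear_combination -e * hf

end CommRing

section Domain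

variable {R : Type*} [CommRing R] [IsDomain R]

theorem exists_eq_rotationMatrix_or_eq_reflectionMatrix {A : Matrix (Fin 2) (Fin 2) R}
    (hA : A ∈ orthogonalGroup (Fin 2) R) :
    ∃ a b, a ^ 2 + b ^ 2 = 1 ∧ (A = rotationMatrix a b ∨ A = reflectionMatrix a b) := by
  obtain ⟨a, b, c, d, rfl⟩ : ∃ a b c d, A = !![a, b; c, d] := ⟨_, _, _, _, eta_fin_two A⟩
  have htranspose : !![a, b; c, d]ᵀ = !![a, c; b, d] := (transposeᵣ_eq _).symm
  rw [mem_orthogonalGroup_iff, htranspose, one_fin_two, mul_fin_two, fin_two_matrix_eq_iff] at hA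
  obtain ⟨⟨h00, h01⟩, -, h11⟩ := hA
  -- `(c, d) ⟂ (a, b)` forces `(c, d) = l • (-b, a)`, where `l` is the determinant
  obtain ⟨l, rfl, rfl⟩ : ∃ l, c = -l * b ∧ d = l * a :=
    ⟨a * d - b * c, by linear_combination -c * h00 + a * h01,
      by linear_combination -d * h00 + b * h01⟩
  refine ⟨a, b, by linear_combination h00, ?_⟩
  rcases mul_self_eq_one_iff.1 (by linear_combination h11 - l * l * h00 : l * l = 1) with rfl | rfl
  · left
    simp [rotationMatrix]
  · right
    simp [reflectionMatrix]

variable [NeZero (2 : R)]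

theorem rotationMatrix_eq_one_or_eq_neg_one_of_commute {a b c d : R} (hab : a ^ 2 + b ^ 2 = 1)
    (hcd : c ^ 2 + d ^ 2 = 1)
    (h : rotationMatrix a b * reflectionMatrix c d = reflectionMatrix c d * rotationMatrix a b) :
    rotationMatrix a b = 1 ∨ rotationMatrix a b = -1 := by
  rw [rotationMatrix, reflectionMatrix, mul_fin_two, mul_fin_two, fin_two_matrix_eq_iff] at h
  obtain ⟨⟨h00, h01⟩, -, -⟩ := h
  obtain rfl : b = 0 := (mul_eq_zero.1
    (by linear_combination d * h00 - c * h01 - 2 * b * hcd : (2 : R) * b = 0)).resolve_left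
      two_ne_zero
  rcases mul_self_eq_one_iff.1 (by linear_combination hab : a * a = 1) with rfl | rfl
  · left
    simp [rotationMatrix, one_fin_two]
  · right
    simp [rotationMatrix, one_fin_two]

theorem reflectionMatrix_eq_or_eq_neg_of_commute {a b c d : R} (hab : a ^ 2 + b ^ 2 = 1)
    (hcd : c ^ 2 + d ^ 2 = 1)
    (h : reflectionMatrix a b * reflectionMatrix c d =
      reflectionMatrix c d * reflectionMatrix a b) :
    reflectionMatrix c d = reflectionMatrix a b ∨
      reflectionMatrix c d = -reflectionMatrix a b := by
  rw [reflectionMatrix, reflectionMatrix, mul_fin_two, mul_fin_two, fin_two_matrix_eq_iff] at h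
  obtain ⟨⟨-, h01⟩, -, -⟩ := h
  have had : a * d - b * c = 0 := (mul_eq_zero.1
    (by linear_combination h01 : (2 : R) * (a * d - b * c) = 0)).resolve_left two_ne_zero
  obtain ⟨k, rfl, rfl⟩ : ∃ k, c = a * k ∧ d = b * k :=
    ⟨a * c + b * d, by linear_combination -c * hab - b * had,
      by linear_combination -d * hab + a * had⟩
  rcases mul_self_eq_one_iff.1 (by linear_combination hcd - k * k * hab : k * k = 1) with rfl | rfl
  · left
    simp
  · right
    simp [reflectionMatrix]

end Domain

section IsAlgClosed

variable {K : Type*} [Field K] [IsAlgClosed K]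

theorem exists_rotationMatrix_mul_reflectionMatrix_eq_diagonal [NeZero (2 : K)] {a b : K}
    (hab : a ^ 2 + b ^ 2 = 1) :
    ∃ e f, e ^ 2 + f ^ 2 = 1 ∧
      rotationMatrix e f * reflectionMatrix a b = diagonal ![1, -1] * rotationMatrix e f := by
  obtain ⟨e, he⟩ := IsAlgClosed.exists_pow_nat_eq ((1 + a) / 2) two_pos
  obtain ⟨f, hf⟩ := IsAlgClosed.exists_pow_nat_eq ((1 - a) / 2) two_pos
  replace he : 2 * e ^ 2 = 1 + a := by rw [he]; field_simp
  replace hf : 2 * f ^ 2 = 1 - a := by rw [hf]; field_simp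
  have hef : e ^ 2 + f ^ 2 = 1 :=
    (mul_right_injective₀ two_ne_zero) (by linear_combination he + hf : (2 : K) * _ = 2 * 1)
  -- `(2ef)² = (1 + a)(1 - a) = b²`, so flipping the sign of `f` if needed gives `2ef = b`
  have hsign : (2 * e * f - b) * (2 * e * (-f) - b) = 0 := by
    linear_combination hab - 2 * f ^ 2 * he - (1 + a) * hf
  rcases mul_eq_zero.1 hsign with h | h
  · exact ⟨e, f, hef,
      rotationMatrix_mul_reflectionMatrix_eq_diagonal he hf (by linear_combination h)⟩
  · exact ⟨e, -f, by linear_combination hef,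
      rotationMatrix_mul_reflectionMatrix_eq_diagonal he (by linear_combination hf)
        (by linear_combination h)⟩

theorem infinite_setOf_coe_eq_rotationMatrix :
    {g : orthogonalGroup (Fin 2) K |
      ∃ a b, (g : Matrix (Fin 2) (Fin 2) K) = rotationMatrix a b}.Infinite := by
  choose a ha using fun b : K ↦ IsAlgClosed.exists_pow_nat_eq (1 - b ^ 2) two_pos
  refine Set.infinite_of_injective_forall_mem
    (f := fun b ↦ ⟨rotationMatrix (a b) b,
      rotationMatrix_mem_orthogonalGroup (by linear_combination ha b)⟩)
    ?_ fun b ↦ ⟨a b, b, rfl⟩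
  intro b c hbc
  simpa [rotationMatrix] using
    congrArg (fun g : orthogonalGroup (Fin 2) K ↦ (g : Matrix (Fin 2) (Fin 2) K) 0 1) hbc

end IsAlgClosed

section OrthogonalGroup

variable {n R : Type*} [Fintype n] [DecidableEq n] [CommRing R]

def traceTriple (p : Matrix n n R × Matrix n n R) : R × R × R :=
  (p.1.trace, p.2.trace, (p.1 * p.2).trace)

theorem trace_coe_conj (g x : orthogonalGroup n R) :
    trace (↑(g * x * g⁻¹) : Matrix n n R) = trace (x : Matrix n n R) := by
  rw [Submonoid.coe_mul, Submonoid.coe_mul, trace_mul_cycle, ← Submonoid.coe_mul,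
    inv_mul_cancel, OneMemClass.coe_one, one_mul]

theorem traceTriple_conj (g x y : orthogonalGroup n R) :
    traceTriple ((↑(g * x * g⁻¹), ↑(g * y * g⁻¹)) : Matrix n n R × Matrix n n R) =
      traceTriple ((x : Matrix n n R), (y : Matrix n n R)) := by
  have hprod : (g * x * g⁻¹) * (g * y * g⁻¹) = g * (x * y) * g⁻¹ := by group
  simp only [traceTriple, ← Submonoid.coe_mul, hprod, trace_coe_conj]

theorem coe_conj_eq_neg {g x y : orthogonalGroup n R}
    (h : (y : Matrix n n R) = -(x : Matrix n n R)) :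
    (↑(g * y * g⁻¹) : Matrix n n R) = -↑(g * x * g⁻¹) := by
  simp only [Submonoid.coe_mul, h, mul_neg, neg_mul]

theorem coe_conj_eq_self_of_coe_eq_one_or_eq_neg_one {g x : orthogonalGroup n R}
    (hx : (x : Matrix n n R) = 1 ∨ (x : Matrix n n R) = -1) :
    (↑(g * x * g⁻¹) : Matrix n n R) = x := by
  rcases hx with hx | hx
  · obtain rfl : x = 1 := Subtype.ext hx
    simp
  · rw [coe_conj_eq_neg (x := 1) hx, hx]
    simp

end OrthogonalGroup

section NormalForms

variable (R : Type*) [CommRing R]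

def normalForms : List (Matrix (Fin 2) (Fin 2) R × Matrix (Fin 2) (Fin 2) R) :=
  let δ : Matrix (Fin 2) (Fin 2) R := diagonal ![1, -1]
  [(1, δ), (-1, δ), (δ, 1), (δ, -1), (δ, δ), (δ, -δ)]

theorem nodup_map_traceTriple_normalForms [IsDomain R] [NeZero (2 : R)] :
    ((normalForms R).map traceTriple).Nodup := by
  have htwo : (2 : R) ≠ -2 := fun h ↦
    two_ne_zero (mul_self_eq_zero.1 (by linear_combination h : (2 : R) * 2 = 0))
  simp [normalForms, traceTriple, one_add_one_eq_two, two_ne_zero, htwo]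

end NormalForms

section ExistsConj

variable {K : Type*} [Field K] [IsAlgClosed K] [NeZero (2 : K)]

theorem exists_coe_conj_eq_diagonal {x : orthogonalGroup (Fin 2) K} {a b : K}
    (hab : a ^ 2 + b ^ 2 = 1) (hx : (x : Matrix (Fin 2) (Fin 2) K) = reflectionMatrix a b) :
    ∃ g : orthogonalGroup (Fin 2) K,
      (↑(g * x * g⁻¹) : Matrix (Fin 2) (Fin 2) K) = diagonal ![1, -1] := by
  obtain ⟨e, f, hef, hconj⟩ := exists_rotationMatrix_mul_reflectionMatrix_eq_diagonal hab
  set g : orthogonalGroup (Fin 2) K := ⟨_, rotationMatrix_mem_orthogonalGroup hef⟩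
  have hg : (g : Matrix (Fin 2) (Fin 2) K) = rotationMatrix e f := rfl
  refine ⟨g, ?_⟩
  rw [Submonoid.coe_mul, Submonoid.coe_mul, hx, hg, hconj, mul_assoc, ← hg,
    ← Submonoid.coe_mul, mul_inv_cancel, OneMemClass.coe_one, mul_one]

theorem exists_conj_mem_normalForms {s h : orthogonalGroup (Fin 2) K} (hcomm : s * h = h * s)
    (hfin : {g | g * s = s * g ∧ g * h = h * g}.Finite) :
    ∃ g : orthogonalGroup (Fin 2) K, ((↑(g * s * g⁻¹), ↑(g * h * g⁻¹)) :
      Matrix (Fin 2) (Fin 2) K × Matrix (Fin 2) (Fin 2) K) ∈ normalForms K := by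
  have hcomm' : (s : Matrix (Fin 2) (Fin 2) K) * h = h * s := congrArg Subtype.val hcomm
  obtain ⟨a, b, hab, hs | hs⟩ := exists_eq_rotationMatrix_or_eq_reflectionMatrix s.2 <;>
    obtain ⟨c, d, hcd, hh | hh⟩ := exists_eq_rotationMatrix_or_eq_reflectionMatrix h.2 <;>
    rw [hs, hh] at hcomm'
  · refine absurd hfin (infinite_setOf_coe_eq_rotationMatrix.mono ?_)
    rintro g ⟨e, f, hg⟩
    exact ⟨Subtype.ext (by simp [hg, hs, rotationMatrix_mul_comm]),
      Subtype.ext (by simp [hg, hh, rotationMatrix_mul_comm])⟩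
  · obtain ⟨g, hg⟩ := exists_coe_conj_eq_diagonal hcd hh
    have hs₁ := rotationMatrix_eq_one_or_eq_neg_one_of_commute hab hcd hcomm'
    rw [← hs] at hs₁
    refine ⟨g, ?_⟩
    rw [coe_conj_eq_self_of_coe_eq_one_or_eq_neg_one hs₁, hg]
    rcases hs₁ with h₁ | h₁ <;> simp [normalForms, h₁]
  · obtain ⟨g, hg⟩ := exists_coe_conj_eq_diagonal hab hs
    have hh₁ := rotationMatrix_eq_one_or_eq_neg_one_of_commute hcd hab hcomm'.symm
    rw [← hh] at hh₁
    refine ⟨g, ?_⟩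
    rw [coe_conj_eq_self_of_coe_eq_one_or_eq_neg_one hh₁, hg]
    rcases hh₁ with h₁ | h₁ <;> simp [normalForms, h₁]
  · obtain ⟨g, hg⟩ := exists_coe_conj_eq_diagonal hab hs
    refine ⟨g, ?_⟩
    rcases reflectionMatrix_eq_or_eq_neg_of_commute hab hcd hcomm' with h₁ | h₁ <;>
      rw [← hh, ← hs] at h₁
    · obtain rfl : h = s := Subtype.ext h₁
      simp [normalForms, hg]
    · rw [coe_conj_eq_neg h₁, hg]
      simp [normalForms]

end ExistsConj

end OrthogonalFinTwo

open OrthogonalFinTwo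

/-- In `O(2,ℂ)` with `δ = diag(1,−1)` (and `−I`, `−δ` the indicated
elements), every commuting pair `(s,h)` with finite common centralizer is simultaneously
conjugate to exactly one of the six pairs `(I,δ), (−I,δ), (δ,I), (δ,−I), (δ,δ), (δ,−δ)`,
and these six pairs lie in pairwise distinct simultaneous-conjugation orbits. -/
theorem stmt_5 (δ negI negδ : Matrix.orthogonalGroup (Fin 2) ℂ)
    (hδ : (δ : Matrix (Fin 2) (Fin 2) ℂ) = Matrix.diagonal ![1, -1])
    (hnegI : (negI : Matrix (Fin 2) (Fin 2) ℂ) = -1)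
    (hnegδ : (negδ : Matrix (Fin 2) (Fin 2) ℂ) = -(δ : Matrix (Fin 2) (Fin 2) ℂ))
    (s h : Matrix.orthogonalGroup (Fin 2) ℂ)
    (hcomm : s * h = h * s)
    (hfin : {g : Matrix.orthogonalGroup (Fin 2) ℂ |
      g * s = s * g ∧ g * h = h * g}.Finite) :
    let L : List (Matrix.orthogonalGroup (Fin 2) ℂ × Matrix.orthogonalGroup (Fin 2) ℂ) :=
      [(1, δ), (negI, δ), (δ, 1), (δ, negI), (δ, δ), (δ, negδ)]
    (∃! p : Matrix.orthogonalGroup (Fin 2) ℂ × Matrix.orthogonalGroup (Fin 2) ℂ,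
      p ∈ L ∧ ∃ g : Matrix.orthogonalGroup (Fin 2) ℂ,
        (g * s * g⁻¹, g * h * g⁻¹) = p) ∧
    (∀ p ∈ L, ∀ q ∈ L,
      (∃ g : Matrix.orthogonalGroup (Fin 2) ℂ, (g * p.1 * g⁻¹, g * p.2 * g⁻¹) = q) →
      p = q) := by
  intro L
  have hL : L.map (Prod.map Subtype.val Subtype.val) = normalForms ℂ := by
    simp [L, normalForms, hδ, hnegI, hnegδ]
  have hinj : ∀ p ∈ L, ∀ q ∈ L,
      traceTriple (Prod.map Subtype.val Subtype.val p) =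
        traceTriple (Prod.map Subtype.val Subtype.val q) → p = q := by
    have hnodup := nodup_map_traceTriple_normalForms ℂ
    rw [← hL, List.map_map] at hnodup
    exact List.inj_on_of_nodup_map hnodup
  obtain ⟨g, hg⟩ := exists_conj_mem_normalForms hcomm hfin
  rw [← hL, List.mem_map] at hg
  obtain ⟨p, hpL, hp⟩ := hg
  obtain rfl : p = (g * s * g⁻¹, g * h * g⁻¹) :=
    (Subtype.val_injective.prodMap Subtype.val_injective) hp
  refine ⟨⟨_, ⟨hpL, g, rfl⟩, ?_⟩, ?_⟩
  · rintro q ⟨hqL, g', rfl⟩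
    exact hinj _ hqL _ hpL ((traceTriple_conj g' s h).trans
      (traceTriple_conj g s h).symm)
  · rintro p hp q hq ⟨g, rfl⟩
    exact hinj _ hp _ hq (traceTriple_conj g p.1 p.2).symm
end

section
/- Let N ⊆ SL(2,ℂ) be the subgroup of matrices that are either diagonal or antidiagonal, and let w = [[0,1],[−1,0]]. Suppose s, h ∈ N satisfy sh = hs and the common centralizer {g ∈ N : gs = sg and gh = hg} is finite. Then (s,h) is conjugate in N (by simultaneous conjugation) to exactly one of the six pairs (I,w), (−I,w), (w,I), (w,−I), (w,w), (w,−w), and these six pairs lie in pairwise distinct simultaneous-conjugation orbits of N. -/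
/-!
If `s` and `h` were both diagonal, the whole torus `diag(u, u⁻¹)` would centralize them, so one of
them is antidiagonal. Conjugation by `diag(u, u⁻¹)` scales the off-diagonal entries by `u ^ 2` and
`u ^ (-2)`, so a suitable square root `u` turns that element into `w`; the other element then
commutes with `w`, and the centralizer of `w` in `N` is `{±1, ±w}`. The six normal forms are
separated by the conjugation invariants `(tr s, tr h, tr (s * h))`.
-/

/-- A matrix in `SL(2,ℂ)` is diagonal or antidiagonal. -/
def diagOrAntidiag (A : Matrix.SpecialLinearGroup (Fin 2) ℂ) : Prop :=
  ((A : Matrix (Fin 2) (Fin 2) ℂ) 0 1 = 0 ∧ (A : Matrix (Fin 2) (Fin 2) ℂ) 1 0 = 0) ∨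
  ((A : Matrix (Fin 2) (Fin 2) ℂ) 0 0 = 0 ∧ (A : Matrix (Fin 2) (Fin 2) ℂ) 1 1 = 0)

open Matrix MatrixGroups

namespace DiagOrAntidiag

section CommRing

variable {R : Type*} [CommRing R]

def diagUnit : Rˣ →* SL(2, R) where
  toFun u := ⟨!![(u : R), 0; 0, ((u⁻¹ : Rˣ) : R)], by simp [det_fin_two]⟩
  map_one' := Subtype.ext <| by simp [one_fin_two]
  map_mul' u v := Subtype.ext <| by
    change _ = !![(u : R), 0; 0, ((u⁻¹ : Rˣ) : R)] * !![(v : R), 0; 0, ((v⁻¹ : Rˣ) : R)]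
    simp [mul_comm]

lemma coe_diagUnit (u : Rˣ) :
    (diagUnit u : Matrix (Fin 2) (Fin 2) R) = !![(u : R), 0; 0, ((u⁻¹ : Rˣ) : R)] := rfl

lemma diagUnit_injective : Function.Injective (diagUnit : Rˣ → SL(2, R)) := by
  intro u v huv
  ext
  simpa [coe_diagUnit] using congr_arg (fun g : SL(2, R) => g 0 0) huv

lemma coe_diagUnit_conj (u : Rˣ) (A : SL(2, R)) :
    ((diagUnit u * A * (diagUnit u)⁻¹ : SL(2, R)) : Matrix (Fin 2) (Fin 2) R) =
      !![A 0 0, u ^ 2 * A 0 1; ((u⁻¹ : Rˣ) : R) ^ 2 * A 1 0, A 1 1] := by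
  rw [← map_inv, Matrix.SpecialLinearGroup.coe_mul, Matrix.SpecialLinearGroup.coe_mul,
    coe_diagUnit, coe_diagUnit, eta_fin_two (A : Matrix (Fin 2) (Fin 2) R)]
  simp [sq, mul_comm, mul_left_comm, mul_assoc]

lemma diagUnit_conj_of_diag (u : Rˣ) {A : SL(2, R)} (h01 : A 0 1 = 0)
    (h10 : A 1 0 = 0) :
    diagUnit u * A * (diagUnit u)⁻¹ = A := Subtype.ext <| by
  conv_rhs => rw [eta_fin_two (A : Matrix (Fin 2) (Fin 2) R)]
  rw [coe_diagUnit_conj, h01, h10, mul_zero, mul_zero]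

lemma commute_diagUnit_of_diag (u : Rˣ) {A : SL(2, R)} (h01 : A 0 1 = 0)
    (h10 : A 1 0 = 0) :
    Commute (diagUnit u) A :=
  mul_inv_eq_iff_eq_mul.mp (diagUnit_conj_of_diag u h01 h10)

def weyl : SL(2, R) := ⟨!![0, 1; -1, 0], by simp [det_fin_two]⟩

lemma coe_weyl : ((weyl : SL(2, R)) : Matrix (Fin 2) (Fin 2) R) = !![0, 1; -1, 0] := rfl

lemma coe_weyl_sq : ((weyl ^ 2 : SL(2, R)) : Matrix (Fin 2) (Fin 2) R) = !![-1, 0; 0, -1] := by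
  simp [sq, coe_weyl]

lemma coe_weyl_cube : ((weyl ^ 3 : SL(2, R)) : Matrix (Fin 2) (Fin 2) R) = !![0, -1; 1, 0] := by
  simp [pow_succ, coe_weyl]

lemma coe_eq_of_commute_weyl {x : SL(2, R)} (hx : Commute x weyl) :
    (x : Matrix (Fin 2) (Fin 2) R) = !![x 0 0, x 0 1; -x 0 1, x 0 0] := by
  have hx' := (Matrix.SpecialLinearGroup.ext_iff _ _).1 hx.eq
  have h10 : x 1 0 = -x 0 1 := by
    simpa [Matrix.SpecialLinearGroup.coe_mul, mul_apply, coe_weyl] using (hx' 0 0).symm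
  have h11 : x 1 1 = x 0 0 := by
    simpa [Matrix.SpecialLinearGroup.coe_mul, mul_apply, coe_weyl] using (hx' 0 1).symm
  ext i j
  fin_cases i <;> fin_cases j <;> simp [h10, h11]

variable [IsDomain R]

lemma eq_one_or_eq_weyl_sq_of_commute_weyl {x : SL(2, R)} (hx : Commute x weyl)
    (h01 : x 0 1 = 0) : x = 1 ∨ x = weyl ^ 2 := by
  have hdet := x.2
  rw [coe_eq_of_commute_weyl hx, det_fin_two_of, h01] at hdet
  rcases mul_self_eq_one_iff.mp (by linear_combination hdet) with h00 | h00
  · refine .inl (Subtype.ext ?_)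
    rw [coe_eq_of_commute_weyl hx, h00, h01, neg_zero,
      Matrix.SpecialLinearGroup.coe_one, one_fin_two]
  · refine .inr (Subtype.ext ?_)
    rw [coe_eq_of_commute_weyl hx, h00, h01, neg_zero, coe_weyl_sq]

lemma eq_weyl_or_eq_weyl_cube_of_commute_weyl {x : SL(2, R)} (hx : Commute x weyl)
    (h00 : x 0 0 = 0) : x = weyl ∨ x = weyl ^ 3 := by
  have hdet := x.2
  rw [coe_eq_of_commute_weyl hx, det_fin_two_of, h00] at hdet
  rcases mul_self_eq_one_iff.mp (by linear_combination hdet) with h01 | h01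
  · refine .inl (Subtype.ext ?_)
    rw [coe_eq_of_commute_weyl hx, h00, h01, coe_weyl]
  · refine .inr (Subtype.ext ?_)
    rw [coe_eq_of_commute_weyl hx, h00, h01, neg_neg, coe_weyl_cube]

end CommRing

section Trace

variable {n R : Type*} [Fintype n] [DecidableEq n] [CommRing R]

def traceTriple (p : SpecialLinearGroup n R × SpecialLinearGroup n R) : R × R × R :=
  (trace (p.1 : Matrix n n R), trace (p.2 : Matrix n n R),
    trace ((p.1 * p.2 : SpecialLinearGroup n R) : Matrix n n R))

lemma trace_coe_conj (g A : SpecialLinearGroup n R) :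
    trace ((g * A * g⁻¹ : SpecialLinearGroup n R) : Matrix n n R) =
      trace (A : Matrix n n R) := by
  rw [Matrix.SpecialLinearGroup.coe_mul, Matrix.SpecialLinearGroup.coe_mul, trace_mul_cycle,
    ← Matrix.SpecialLinearGroup.coe_mul g⁻¹ g, inv_mul_cancel, Matrix.SpecialLinearGroup.coe_one,
    Matrix.one_mul]

lemma traceTriple_conj (g a b : SpecialLinearGroup n R) :
    traceTriple (g * a * g⁻¹, g * b * g⁻¹) = traceTriple (a, b) := by
  have hab : g * a * g⁻¹ * (g * b * g⁻¹) = g * (a * b) * g⁻¹ := by group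
  simp only [traceTriple, hab, trace_coe_conj]

end Trace

def normalPairs : List (SL(2, ℂ) × SL(2, ℂ)) :=
  [(1, weyl), (weyl ^ 2, weyl), (weyl, 1), (weyl, weyl ^ 2), (weyl, weyl), (weyl, weyl ^ 3)]

lemma nodup_map_traceTriple_normalPairs : (normalPairs.map traceTriple).Nodup := by
  norm_num [normalPairs, traceTriple, coe_weyl, pow_succ, trace_fin_two]

lemma diagOrAntidiag_diagUnit (u : ℂˣ) : diagOrAntidiag (diagUnit u) :=
  Or.inl ⟨rfl, rfl⟩

lemma diagOrAntidiag_diagUnit_conj (u : ℂˣ) {A : SL(2, ℂ)} (hA : diagOrAntidiag A) :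
    diagOrAntidiag (diagUnit u * A * (diagUnit u)⁻¹) := by
  unfold diagOrAntidiag at hA ⊢
  rw [coe_diagUnit_conj]
  simpa using hA

lemma exists_diagUnit_conj_eq_weyl {A : SL(2, ℂ)} (h00 : A 0 0 = 0) (h11 : A 1 1 = 0) :
    ∃ u : ℂˣ, diagUnit u * A * (diagUnit u)⁻¹ = weyl := by
  have hdet : A 0 1 * A 1 0 = -1 := by
    have := A.2
    rw [det_fin_two, h00, h11] at this
    linear_combination -this
  have h01 : A 0 1 ≠ 0 := left_ne_zero_of_mul (by rw [hdet]; norm_num)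
  obtain ⟨t, ht⟩ := IsAlgClosed.exists_pow_nat_eq (A 0 1)⁻¹ two_pos
  have ht0 : t ≠ 0 := fun ht0 => h01 (inv_eq_zero.mp (by rw [← ht, ht0]; norm_num))
  refine ⟨Units.mk0 t ht0, Subtype.ext ?_⟩
  rw [coe_diagUnit_conj, coe_weyl, h00, h11]
  ext i j
  fin_cases i <;> fin_cases j <;> simp [ht, h01, hdet]

def commonCentralizer (s h : SL(2, ℂ)) : Set SL(2, ℂ) :=
  {g | diagOrAntidiag g ∧ g * s = s * g ∧ g * h = h * g}

lemma infinite_commonCentralizer_of_diag {s h : SL(2, ℂ)} (hs01 : s 0 1 = 0)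
    (hs10 : s 1 0 = 0) (hh01 : h 0 1 = 0) (hh10 : h 1 0 = 0) :
    (commonCentralizer s h).Infinite := by
  have : Infinite ℂˣ :=
    unitsEquivNeZero.infinite_iff.mpr (Set.finite_singleton 0).infinite_compl.to_subtype
  exact Set.infinite_of_injective_forall_mem diagUnit_injective fun u =>
    ⟨diagOrAntidiag_diagUnit u, commute_diagUnit_of_diag u hs01 hs10,
      commute_diagUnit_of_diag u hh01 hh10⟩

lemma exists_conj_mem_normalPairs_of_fst_antidiag {s h : SL(2, ℂ)} (hs00 : s 0 0 = 0)
    (hs11 : s 1 1 = 0) (hh : diagOrAntidiag h) (hcomm : Commute s h) :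
    ∃ p ∈ normalPairs, ∃ g, diagOrAntidiag g ∧ (g * s * g⁻¹, g * h * g⁻¹) = p := by
  obtain ⟨u, hu⟩ := exists_diagUnit_conj_eq_weyl hs00 hs11
  have hcomm' : Commute (diagUnit u * h * (diagUnit u)⁻¹) weyl := by
    simpa only [MulAut.conj_apply, hu] using (hcomm.map (MulAut.conj (diagUnit u))).symm
  refine ⟨_, ?_, diagUnit u, diagOrAntidiag_diagUnit u, rfl⟩
  rw [hu]
  rcases diagOrAntidiag_diagUnit_conj u hh with ⟨h01, -⟩ | ⟨h00, -⟩
  · rcases eq_one_or_eq_weyl_sq_of_commute_weyl hcomm' h01 with e | e <;> simp [e, normalPairs]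
  · rcases eq_weyl_or_eq_weyl_cube_of_commute_weyl hcomm' h00 with e | e <;> simp [e, normalPairs]

lemma exists_conj_mem_normalPairs_of_snd_antidiag {s h : SL(2, ℂ)} (hs01 : s 0 1 = 0)
    (hs10 : s 1 0 = 0) (hh00 : h 0 0 = 0) (hh11 : h 1 1 = 0) (hcomm : Commute s h) :
    ∃ p ∈ normalPairs, ∃ g, diagOrAntidiag g ∧ (g * s * g⁻¹, g * h * g⁻¹) = p := by
  obtain ⟨u, hu⟩ := exists_diagUnit_conj_eq_weyl hh00 hh11
  have hsu := diagUnit_conj_of_diag u hs01 hs10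
  have hcomm' : Commute s weyl := by
    simpa only [MulAut.conj_apply, hu, hsu] using hcomm.map (MulAut.conj (diagUnit u))
  refine ⟨_, ?_, diagUnit u, diagOrAntidiag_diagUnit u, rfl⟩
  rw [hu, hsu]
  rcases eq_one_or_eq_weyl_sq_of_commute_weyl hcomm' hs01 with rfl | rfl <;> simp [normalPairs]

lemma exists_conj_mem_normalPairs {s h : SL(2, ℂ)} (hs : diagOrAntidiag s)
    (hh : diagOrAntidiag h) (hcomm : Commute s h)
    (hfin : (commonCentralizer s h).Finite) :
    ∃ p ∈ normalPairs, ∃ g, diagOrAntidiag g ∧ (g * s * g⁻¹, g * h * g⁻¹) = p := by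
  rcases hs with ⟨hs01, hs10⟩ | ⟨hs00, hs11⟩
  · rcases hh with ⟨hh01, hh10⟩ | ⟨hh00, hh11⟩
    · exact absurd hfin (infinite_commonCentralizer_of_diag hs01 hs10 hh01 hh10)
    · exact exists_conj_mem_normalPairs_of_snd_antidiag hs01 hs10 hh00 hh11 hcomm
  · exact exists_conj_mem_normalPairs_of_fst_antidiag hs00 hs11 hh hcomm

end DiagOrAntidiag

open DiagOrAntidiag in
/-- In the subgroup `N ⊆ SL(2,ℂ)` of diagonal-or-antidiagonal matrices,
every commuting pair `(s,h)` of elements of `N` with finite common centralizer in `N`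
is simultaneously `N`-conjugate to exactly one of the six pairs
`(I,w), (−I,w), (w,I), (w,−I), (w,w), (w,−w)` (here `−I = w²`, `−w = w³`), and these six
pairs lie in pairwise distinct simultaneous-conjugation `N`-orbits. -/
theorem stmt_7 (w : Matrix.SpecialLinearGroup (Fin 2) ℂ)
    (hw : (w : Matrix (Fin 2) (Fin 2) ℂ) = !![0, 1; -1, 0])
    (s h : Matrix.SpecialLinearGroup (Fin 2) ℂ)
    (hs : diagOrAntidiag s) (hh : diagOrAntidiag h)
    (hcomm : s * h = h * s)
    (hfin : {g : Matrix.SpecialLinearGroup (Fin 2) ℂ |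
      diagOrAntidiag g ∧ g * s = s * g ∧ g * h = h * g}.Finite) :
    let L : List (Matrix.SpecialLinearGroup (Fin 2) ℂ × Matrix.SpecialLinearGroup (Fin 2) ℂ) :=
      [(1, w), (w ^ 2, w), (w, 1), (w, w ^ 2), (w, w), (w, w ^ 3)]
    (∃! p : Matrix.SpecialLinearGroup (Fin 2) ℂ × Matrix.SpecialLinearGroup (Fin 2) ℂ,
      p ∈ L ∧ ∃ g : Matrix.SpecialLinearGroup (Fin 2) ℂ, diagOrAntidiag g ∧
        (g * s * g⁻¹, g * h * g⁻¹) = p) ∧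
    (∀ p ∈ L, ∀ q ∈ L,
      (∃ g : Matrix.SpecialLinearGroup (Fin 2) ℂ, diagOrAntidiag g ∧
        (g * p.1 * g⁻¹, g * p.2 * g⁻¹) = q) →
      p = q) := by
  intro L
  obtain rfl : w = weyl := Subtype.ext hw
  have hsep : ∀ p ∈ L, ∀ q ∈ L, traceTriple p = traceTriple q → p = q :=
    List.inj_on_of_nodup_map nodup_map_traceTriple_normalPairs
  obtain ⟨p, hpL, g, hg, rfl⟩ := exists_conj_mem_normalPairs hs hh hcomm hfin
  refine ⟨⟨_, ⟨hpL, g, hg, rfl⟩, ?_⟩, ?_⟩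
  · rintro q ⟨hqL, g', -, rfl⟩
    exact hsep _ hqL _ hpL (by rw [traceTriple_conj, traceTriple_conj])
  · rintro p hp q hq ⟨g, -, rfl⟩
    exact hsep _ hp _ hq (traceTriple_conj g p.1 p.2).symm
end

section
/- Let s = diag(i,−i) and w = [[0,1],[−1,0]] in SL(2,ℂ). Then the set {A ∈ SL(2,ℂ) : A s A⁻¹ ∈ {s, −s} and A w A⁻¹ ∈ {w, −w}} is exactly the eight-element subgroup {I, −I, s, −s, w, −w, sw, −sw}, which is isomorphic to the quaternion group of order 8. -/
/-!
The relations `s * s = w * w = -1`, `s * w = -(w * s)` make `⟨s, w⟩` a quotient of the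
quaternion group `Q₈`, and it is all of `Q₈` because `s` has order 4 and `w` is not a power of `s`.
The matrices conjugating `s` to `±s` and `w` to `±w` form a subgroup containing `s` and `w`.
Conversely, if `A` is such a matrix, one of `q = 1, s, w, s * w` acts on `s` and `w` with the same
signs as `A`, so `q⁻¹ * A` commutes with `s` and `w`; a direct computation shows that this forces
`q⁻¹ * A = ±1`, whence `A ∈ {±1, ±s, ±w, ±s * w}`.
-/

open Matrix Complex Subgroup
open scoped MatrixGroups

section ZModPow

variable {G : Type*} [Group G] {x : G} {m : ℕ}

theorem pow_val_natCast (hx : x ^ m = 1) (k : ℕ) : x ^ (k : ZMod m).val = x ^ k := by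
  rw [ZMod.val_natCast, ← pow_eq_pow_mod k hx]

theorem pow_val_add [NeZero m] (hx : x ^ m = 1) (i j : ZMod m) :
    x ^ (i + j).val = x ^ i.val * x ^ j.val := by
  rw [ZMod.val_add, ← pow_eq_pow_mod _ hx, pow_add]

theorem pow_val_neg [NeZero m] (hx : x ^ m = 1) (i : ZMod m) : x ^ (-i).val = (x ^ i.val)⁻¹ := by
  rw [eq_inv_iff_mul_eq_one, ← pow_val_add hx, neg_add_cancel, ZMod.val_zero, pow_zero]

end ZModPow

namespace QuaternionGroup

variable {n : ℕ} [NeZero n] {H : Type*} [Group H]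

def lift (s w : H) (hs : s ^ (2 * n) = 1) (hw : w ^ 2 = s ^ n) (hsw : s * w = w * s⁻¹) :
    QuaternionGroup n →* H where
  toFun
    | a i => s ^ i.val
    | xa i => w * s ^ i.val
  map_one' := by simp [← a_zero]
  map_mul' := by
    have hcomm (k : ℕ) : s ^ k * w = w * (s ^ k)⁻¹ := by
      rw [← inv_pow]; exact (SemiconjBy.pow_right hsw.symm k).eq.symm
    rintro (i | i) (j | j)
    · simp only [a_mul_a, pow_val_add hs]
    · simp only [a_mul_xa, sub_eq_neg_add, pow_val_add hs, pow_val_neg hs, ← mul_assoc, hcomm]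
    · simp only [xa_mul_a, pow_val_add hs, mul_assoc]
    · simp only [xa_mul_xa]
      rw [add_sub_assoc, sub_eq_neg_add, pow_val_add hs, pow_val_add hs, pow_val_natCast hs,
        pow_val_neg hs, ← hw, mul_assoc w (s ^ _), ← mul_assoc (s ^ _) w, hcomm, sq]
      simp only [mul_assoc]

variable {s w : H} {hs : s ^ (2 * n) = 1} {hw : w ^ 2 = s ^ n} {hsw : s * w = w * s⁻¹}

@[simp]
theorem lift_a (i : ZMod (2 * n)) : lift s w hs hw hsw (a i) = s ^ i.val := rfl

@[simp]
theorem lift_xa (i : ZMod (2 * n)) : lift s w hs hw hsw (xa i) = w * s ^ i.val := rfl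

theorem lift_injective (hs' : orderOf s = 2 * n) (hw' : w ∉ zpowers s) :
    Function.Injective (lift s w hs hw hsw) := by
  rw [injective_iff_map_eq_one]
  rintro (i | i) h
  · rw [lift_a, ← orderOf_dvd_iff_pow_eq_one, hs'] at h
    rw [(ZMod.val_eq_zero i).mp (Nat.eq_zero_of_dvd_of_lt h (ZMod.val_lt i)), a_zero]
  · rw [lift_xa, mul_eq_one_iff_eq_inv] at h
    exact absurd (h ▸ inv_mem (npow_mem_zpowers s _)) hw'

theorem range_lift : (lift s w hs hw hsw).range = closure {s, w} := by
  have hs_mem : s ∈ closure {s, w} := subset_closure (by simp)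
  have hw_mem : w ∈ closure {s, w} := subset_closure (by simp)
  apply le_antisymm
  · rintro _ ⟨i | i, rfl⟩
    · exact pow_mem hs_mem _
    · exact mul_mem hw_mem (pow_mem hs_mem _)
  · rw [closure_le, Set.insert_subset_iff, Set.singleton_subset_iff]
    refine ⟨⟨a 1, ?_⟩, ⟨xa 0, ?_⟩⟩
    · rw [lift_a, ← Nat.cast_one, pow_val_natCast hs, pow_one]
    · rw [lift_xa, ZMod.val_zero, pow_zero, mul_one]

end QuaternionGroup

theorem commute_inv_mul_of_conj_eq {G : Type*} [Group G] {a q x : G}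
    (h : a * x * a⁻¹ = q * x * q⁻¹) : Commute (q⁻¹ * a) x :=
  calc q⁻¹ * a * x = q⁻¹ * (a * x * a⁻¹) * a := by group
    _ = x * (q⁻¹ * a) := by rw [h]; group

section HasDistribNeg

variable {G : Type*} [Group G] [HasDistribNeg G]

theorem conj_neg (a x : G) : a * -x * a⁻¹ = -(a * x * a⁻¹) := by
  rw [mul_neg, neg_mul]

theorem conj_eq_neg_of_mul_eq_neg {a x : G} (h : a * x = -(x * a)) : a * x * a⁻¹ = -x :=
  mul_inv_eq_of_eq_mul (h.trans (neg_mul x a).symm)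

/-- The preimage of the centralizer of the image of `S` in `G ⧸ {1, -1}`. -/
def Subgroup.centralizerUpToSign (S : Set G) : Subgroup G where
  carrier := {a | ∀ x ∈ S, a * x * a⁻¹ = x ∨ a * x * a⁻¹ = -x}
  one_mem' := by simp
  mul_mem' := by
    intro a b ha hb x hx
    rw [show a * b * x * (a * b)⁻¹ = a * (b * x * b⁻¹) * a⁻¹ by group]
    rcases hb x hx with h | h <;> rw [h]
    · exact ha x hx
    · rw [conj_neg, neg_eq_iff_eq_neg, neg_inj, or_comm]; exact ha x hx
  inv_mem' := by
    intro a ha x hx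
    have hx' : a⁻¹ * (a * x * a⁻¹) * a⁻¹⁻¹ = x := by group
    rcases ha x hx with h | h <;> rw [h] at hx'
    · exact .inl hx'
    · rw [conj_neg, neg_eq_iff_eq_neg] at hx'; exact .inr hx'

theorem Subgroup.mem_centralizerUpToSign {S : Set G} {a : G} :
    a ∈ centralizerUpToSign S ↔ ∀ x ∈ S, a * x * a⁻¹ = x ∨ a * x * a⁻¹ = -x :=
  Iff.rfl

def quaternionUnits (s w : G) : Set G := {1, -1, s, -s, w, -w, s * w, -(s * w)}

variable {s w : G}

theorem closure_pair_le_centralizerUpToSign (hsw : s * w = -(w * s)) :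
    closure {s, w} ≤ centralizerUpToSign {s, w} := by
  have hws : w * s = -(s * w) := neg_eq_iff_eq_neg.mp hsw.symm
  rw [closure_le, Set.insert_subset_iff, Set.singleton_subset_iff]
  refine ⟨?_, ?_⟩ <;> rintro x (rfl | rfl)
  exacts [.inl (by group), .inr (conj_eq_neg_of_mul_eq_neg hsw),
    .inr (conj_eq_neg_of_mul_eq_neg hws), .inl (by group)]

theorem eq_or_eq_neg_of_conj_eq (hcent : ∀ a : G, Commute a s → Commute a w → a = 1 ∨ a = -1)
    {a q : G} (hs : a * s * a⁻¹ = q * s * q⁻¹) (hw : a * w * a⁻¹ = q * w * q⁻¹) :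
    a = q ∨ a = -q := by
  rcases hcent _ (commute_inv_mul_of_conj_eq hs) (commute_inv_mul_of_conj_eq hw) with h | h
  · exact .inl (inv_mul_eq_one.mp h).symm
  · exact .inr (by rw [inv_mul_eq_iff_eq_mul.mp h, mul_neg_one])

theorem centralizerUpToSign_pair_subset_quaternionUnits (hsw : s * w = -(w * s))
    (hcent : ∀ a : G, Commute a s → Commute a w → a = 1 ∨ a = -1) :
    (centralizerUpToSign {s, w} : Set G) ⊆ quaternionUnits s w := by
  intro a ha
  have hs_w : s * w * s⁻¹ = -w := conj_eq_neg_of_mul_eq_neg hsw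
  have hw_s : w * s * w⁻¹ = -s := conj_eq_neg_of_mul_eq_neg (neg_eq_iff_eq_neg.mp hsw.symm)
  have key (q : G) := eq_or_eq_neg_of_conj_eq hcent (a := a) (q := q)
  rcases ha s (by simp) with has | has <;> rcases ha w (by simp) with haw | haw
  · rcases key 1 (by simpa) (by simpa) with rfl | rfl <;> simp [quaternionUnits]
  · rcases key s (has.trans (by group)) (haw.trans hs_w.symm) with rfl | rfl <;>
      simp [quaternionUnits]
  · rcases key w (has.trans hw_s.symm) (haw.trans (by group)) with rfl | rfl <;>
      simp [quaternionUnits]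
  · have h_s : s * w * s * (s * w)⁻¹ = -s := by
      rw [show s * w * s * (s * w)⁻¹ = s * (w * s * w⁻¹) * s⁻¹ by group, hw_s, conj_neg,
        mul_inv_cancel_right]
    have h_w : s * w * w * (s * w)⁻¹ = -w := by
      rw [show s * w * w * (s * w)⁻¹ = s * w * s⁻¹ by group, hs_w]
    rcases key (s * w) (has.trans h_s.symm) (haw.trans h_w.symm) with rfl | rfl <;>
      simp [quaternionUnits]

theorem quaternionUnits_subset_closure (hs : s * s = -1) :
    quaternionUnits s w ⊆ closure {s, w} := by
  have hs_mem : s ∈ closure {s, w} := subset_closure (by simp)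
  have hw_mem : w ∈ closure {s, w} := subset_closure (by simp)
  have hneg {x : G} (hx : x ∈ closure {s, w}) : -x ∈ closure {s, w} := by
    rw [← neg_one_mul, ← hs]; exact mul_mem (mul_mem hs_mem hs_mem) hx
  intro a ha
  simp only [quaternionUnits, Set.mem_insert_iff, Set.mem_singleton_iff] at ha
  rcases ha with rfl | rfl | rfl | rfl | rfl | rfl | rfl | rfl
  exacts [one_mem _, hneg (one_mem _), hs_mem, hneg hs_mem, hw_mem, hneg hw_mem,
    mul_mem hs_mem hw_mem, hneg (mul_mem hs_mem hw_mem)]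

theorem nonempty_closure_pair_mulEquiv_quaternionGroup (hne : (-1 : G) ≠ 1) (hs : s * s = -1)
    (hw : w * w = -1) (hsw : s * w = -(w * s)) :
    Nonempty (closure {s, w} ≃* QuaternionGroup 2) := by
  have hs2 : s ^ 2 = -1 := by rw [sq, hs]
  have hs4 : s ^ (2 * 2) = 1 := by rw [pow_mul, hs2, sq, neg_one_mul, neg_neg]
  have hw2 : w ^ 2 = s ^ 2 := by rw [sq, hw, hs2]
  have hs_inv : s⁻¹ = -s := inv_eq_of_mul_eq_one_right (by rw [mul_neg, hs, neg_neg])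
  have hsw' : s * w = w * s⁻¹ := by rw [hs_inv, mul_neg, hsw]
  have hord : orderOf s = 2 * 2 := orderOf_eq_prime_pow (p := 2) (n := 1)
    (by rw [pow_one, hs2]; exact hne) hs4
  have hw_mem : w ∉ zpowers s := by
    intro h
    obtain ⟨k, rfl⟩ := mem_zpowers_iff.mp h
    have hcomm : s * s ^ k = s ^ k * s := (Commute.refl s).zpow_right k
    rw [hcomm, ← neg_one_mul, eq_comm, mul_eq_right] at hsw
    exact hne hsw
  have hinj : Function.Injective (QuaternionGroup.lift s w hs4 hw2 hsw') :=
    QuaternionGroup.lift_injective hord hw_mem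
  exact ⟨(MulEquiv.subgroupCongr QuaternionGroup.range_lift).symm.trans
    (MonoidHom.ofInjective hinj).symm⟩

end HasDistribNeg

namespace Matrix.SpecialLinearGroup

variable {n R : Type*} [Fintype n] [DecidableEq n] [CommRing R] [Fact (Even (Fintype.card n))]

theorem setOf_coe_conj_mem_eq_centralizerUpToSign (s w : SpecialLinearGroup n R) :
    {a : SpecialLinearGroup n R |
      ((a * s * a⁻¹ : SpecialLinearGroup n R) : Matrix n n R) ∈
        ({(s : Matrix n n R), -(s : Matrix n n R)} : Set (Matrix n n R)) ∧
      ((a * w * a⁻¹ : SpecialLinearGroup n R) : Matrix n n R) ∈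
        ({(w : Matrix n n R), -(w : Matrix n n R)} : Set (Matrix n n R))} =
      centralizerUpToSign {s, w} := by
  have coe_inj (x y : SpecialLinearGroup n R) : (x : Matrix n n R) = y ↔ x = y :=
    Subtype.val_injective.eq_iff
  ext a
  simp only [SetLike.mem_coe, mem_centralizerUpToSign, Set.mem_ofPred_eq, Set.mem_insert_iff,
    Set.mem_singleton_iff, ← coe_neg, coe_inj, forall_eq_or_imp, forall_eq]

theorem setOf_coe_mem_eq_quaternionUnits (s w : SpecialLinearGroup n R) :
    {a : SpecialLinearGroup n R | (a : Matrix n n R) ∈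
      ({1, -1, (s : Matrix n n R), -(s : Matrix n n R), (w : Matrix n n R), -(w : Matrix n n R),
        (s : Matrix n n R) * (w : Matrix n n R), -((s : Matrix n n R) * (w : Matrix n n R))} :
        Set (Matrix n n R))} = quaternionUnits s w := by
  have coe_inj (x y : SpecialLinearGroup n R) : (x : Matrix n n R) = y ↔ x = y :=
    Subtype.val_injective.eq_iff
  have h1 : (1 : Matrix n n R) = ((1 : SpecialLinearGroup n R) : Matrix n n R) := rfl
  have hmul : (s : Matrix n n R) * (w : Matrix n n R) =
      ((s * w : SpecialLinearGroup n R) : Matrix n n R) := rfl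
  ext a
  simp only [quaternionUnits, Set.mem_insert_iff, Set.mem_singleton_iff, Set.mem_ofPred_eq, h1,
    hmul, ← coe_neg, coe_inj]

end Matrix.SpecialLinearGroup

section SL2

variable {s w : SL(2, ℂ)}

theorem mul_self_eq_neg_one_of_coe_eq_diag
    (hs : (s : Matrix (Fin 2) (Fin 2) ℂ) = !![I, 0; 0, -I]) : s * s = -1 := by
  ext i j; fin_cases i <;> fin_cases j <;> simp [hs, mul_apply]

theorem mul_self_eq_neg_one_of_coe_eq_rotation
    (hw : (w : Matrix (Fin 2) (Fin 2) ℂ) = !![0, 1; -1, 0]) : w * w = -1 := by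
  ext i j; fin_cases i <;> fin_cases j <;> simp [hw, mul_apply]

theorem mul_eq_neg_mul_of_coe_eq_diag_rotation
    (hs : (s : Matrix (Fin 2) (Fin 2) ℂ) = !![I, 0; 0, -I])
    (hw : (w : Matrix (Fin 2) (Fin 2) ℂ) = !![0, 1; -1, 0]) : s * w = -(w * s) := by
  ext i j; fin_cases i <;> fin_cases j <;> simp [hs, hw, mul_apply]

theorem eq_one_or_eq_neg_one_of_commute_diag_rotation
    (hs : (s : Matrix (Fin 2) (Fin 2) ℂ) = !![I, 0; 0, -I])
    (hw : (w : Matrix (Fin 2) (Fin 2) ℂ) = !![0, 1; -1, 0]) {a : SL(2, ℂ)}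
    (has : Commute a s) (haw : Commute a w) : a = 1 ∨ a = -1 := by
  have es (i j : Fin 2) : (a * s) i j = (s * a) i j := by rw [has.eq]
  have ew (i j : Fin 2) : (a * w) i j = (w * a) i j := by rw [haw.eq]
  have hdet := a.det_coe
  simp only [Matrix.SpecialLinearGroup.coe_mul, hs, hw, mul_apply, of_apply, cons_val',
    cons_val_fin_one, Fin.sum_univ_two, Fin.isValue, cons_val_zero, cons_val_one,
    Fin.forall_fin_two, mul_zero, add_zero, mul_neg, zero_add, zero_mul, neg_mul, neg_inj, mul_one,
    one_mul] at es ew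
  rw [det_fin_two] at hdet
  set A : Matrix (Fin 2) (Fin 2) ℂ := ↑a
  obtain ⟨⟨-, e01⟩, e10, -⟩ := es
  obtain ⟨⟨-, e⟩, -, -⟩ := ew
  have h01 : A 0 1 = 0 := by linear_combination (I / 2) * e01 + A 0 1 * I_sq
  have h10 : A 1 0 = 0 := by linear_combination (-I / 2) * e10 + A 1 0 * I_sq
  have hsq : A 0 0 * A 0 0 = 1 := by linear_combination hdet + A 0 0 * e + A 1 0 * h01
  rcases mul_self_eq_one_iff.mp hsq with h | h
  · refine .inl (Subtype.ext (?_ : A = 1))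
    ext i j; fin_cases i <;> fin_cases j <;> simp [h01, h10, h, ← e]
  · refine .inr (Subtype.ext (?_ : A = -1))
    ext i j; fin_cases i <;> fin_cases j <;> simp [h01, h10, h, ← e]

theorem SL2_neg_one_ne_one : (-1 : SL(2, ℂ)) ≠ 1 := fun h => by
  have h00 := congrArg (fun a : SL(2, ℂ) => (a : Matrix (Fin 2) (Fin 2) ℂ) 0 0) h
  norm_num at h00

end SL2

/-- For `s = diag(i,−i)` and `w = [[0,1],[−1,0]]` in `SL(2,ℂ)`, the set
`{A ∈ SL(2,ℂ) : AsA⁻¹ ∈ {s,−s} and AwA⁻¹ ∈ {w,−w}}` is exactly the eight-element subgroup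
`{±I, ±s, ±w, ±sw}` (the subgroup generated by `s` and `w`), which is isomorphic to the
quaternion group of order 8. -/
theorem stmt_8 (s w : Matrix.SpecialLinearGroup (Fin 2) ℂ)
    (hs : (s : Matrix (Fin 2) (Fin 2) ℂ) = !![Complex.I, 0; 0, -Complex.I])
    (hw : (w : Matrix (Fin 2) (Fin 2) ℂ) = !![0, 1; -1, 0]) :
    let E : Set (Matrix.SpecialLinearGroup (Fin 2) ℂ) :=
      {A | ((A * s * A⁻¹ : Matrix.SpecialLinearGroup (Fin 2) ℂ) : Matrix (Fin 2) (Fin 2) ℂ)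
              ∈ ({(s : Matrix (Fin 2) (Fin 2) ℂ), -(s : Matrix (Fin 2) (Fin 2) ℂ)} :
                Set (Matrix (Fin 2) (Fin 2) ℂ)) ∧
           ((A * w * A⁻¹ : Matrix.SpecialLinearGroup (Fin 2) ℂ) : Matrix (Fin 2) (Fin 2) ℂ)
              ∈ ({(w : Matrix (Fin 2) (Fin 2) ℂ), -(w : Matrix (Fin 2) (Fin 2) ℂ)} :
                Set (Matrix (Fin 2) (Fin 2) ℂ))}
    (E = {A : Matrix.SpecialLinearGroup (Fin 2) ℂ |
        (A : Matrix (Fin 2) (Fin 2) ℂ) ∈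
          ({1, -1, (s : Matrix (Fin 2) (Fin 2) ℂ), -(s : Matrix (Fin 2) (Fin 2) ℂ),
            (w : Matrix (Fin 2) (Fin 2) ℂ), -(w : Matrix (Fin 2) (Fin 2) ℂ),
            (s : Matrix (Fin 2) (Fin 2) ℂ) * (w : Matrix (Fin 2) (Fin 2) ℂ),
            -((s : Matrix (Fin 2) (Fin 2) ℂ) * (w : Matrix (Fin 2) (Fin 2) ℂ))} :
            Set (Matrix (Fin 2) (Fin 2) ℂ))}) ∧
    (E = (Subgroup.closure {s, w} : Set (Matrix.SpecialLinearGroup (Fin 2) ℂ))) ∧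
    Nat.card (Subgroup.closure ({s, w} : Set (Matrix.SpecialLinearGroup (Fin 2) ℂ))) = 8 ∧
    Nonempty ((Subgroup.closure ({s, w} : Set (Matrix.SpecialLinearGroup (Fin 2) ℂ)))
      ≃* QuaternionGroup 2) := by
  intro E
  have hss := mul_self_eq_neg_one_of_coe_eq_diag hs
  have hsw := mul_eq_neg_mul_of_coe_eq_diag_rotation hs hw
  have hE : E = centralizerUpToSign {s, w} :=
    SpecialLinearGroup.setOf_coe_conj_mem_eq_centralizerUpToSign s w
  have h_sub := centralizerUpToSign_pair_subset_quaternionUnits hsw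
    (fun _ => eq_one_or_eq_neg_one_of_commute_diag_rotation hs hw)
  have h_closure := quaternionUnits_subset_closure (w := w) hss
  have h_le := closure_pair_le_centralizerUpToSign hsw
  obtain ⟨e⟩ := nonempty_closure_pair_mulEquiv_quaternionGroup SL2_neg_one_ne_one hss
    (mul_self_eq_neg_one_of_coe_eq_rotation hw) hsw
  refine ⟨?_, ?_, ?_, ⟨e⟩⟩
  · rw [hE, SpecialLinearGroup.setOf_coe_mem_eq_quaternionUnits]
    exact h_sub.antisymm (h_closure.trans h_le)
  · rw [hE]; exact (h_sub.trans h_closure).antisymm h_le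
  · rw [Nat.card_congr e.toEquiv, Nat.card_eq_fintype_card, QuaternionGroup.card]
end

section
/- Let D = {diag(z, z⁻¹) : z ∈ ℂˣ} ⊆ SL(2,ℂ), let SO(2,ℂ) = {A ∈ O(2,ℂ) : det A = 1}, let w = [[0,1],[−1,0]], r = diag(1,−1), and δ = (w, r) ∈ SL(2,ℂ) × O(2,ℂ). Let Γ be the subgroup of SL(2,ℂ) × O(2,ℂ) generated by D × SO(2,ℂ) together with δ. Then: (a) δ² = (−I, I) and conjugation by δ inverts every element of D × SO(2,ℂ); (b) the centralizer of δ in Γ is exactly {(aI, bI) : a,b ∈ {1,−1}} ∪ {(aI, bI)·δ : a,b ∈ {1,−1}}, a group of order 8 isomorphic to (ℤ/4) × (ℤ/2). -/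
/-!
Write `H = D × SO(2)`. Conjugation by `δ` inverts `H` and `δ² ∈ H`, so the group generated
by `H` and `δ` is `H ∪ Hδ`, and an element `h` or `hδ` of it commutes with `δ` exactly when
`h = h⁻¹`. The involutions of `D` are `±I`; an involution in `O(2)` is symmetric, and a
symmetric rotation is `±I` (in characteristic `≠ 2`). Hence the centralizer is generated by
`δ`, of order 4, and `ε = (I, -I)`, of order 2; they commute, and `⟨δ⟩ ∩ ⟨ε⟩ = 1` because `ε`
has trivial first component while the first component of `δ` has order 4.
-/

section InvertingElement

variable {G : Type*} [Group G] {H : Subgroup G} {δ : G}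

theorem mem_closure_union_singleton_of_conj_eq_inv (hconj : ∀ h ∈ H, δ * h * δ⁻¹ = h⁻¹)
    (hsq : δ ^ 2 ∈ H) {g : G} :
    g ∈ Subgroup.closure ((H : Set G) ∪ {δ}) ↔ g ∈ H ∨ g * δ⁻¹ ∈ H := by
  constructor
  · intro hg
    induction hg using Subgroup.closure_induction with
    | mem x hx =>
      rcases hx with hx | rfl
      · exact .inl hx
      · exact .inr (by simp)
    | one => exact .inl H.one_mem
    | mul x y _ _ hx hy =>
      have hxy : x * y * δ⁻¹ = x * δ⁻¹ * (δ * y * δ⁻¹) := by group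
      have hxy' : x * y = x * δ⁻¹ * (δ * (y * δ⁻¹) * δ⁻¹) * δ ^ 2 := by group
      rcases hx with hx | hx <;> rcases hy with hy | hy
      · exact .inl (mul_mem hx hy)
      · exact .inr (by simpa [mul_assoc] using mul_mem hx hy)
      · exact .inr (by rw [hxy, hconj y hy]; exact mul_mem hx (inv_mem hy))
      · exact .inl (by rw [hxy', hconj _ hy]; exact mul_mem (mul_mem hx (inv_mem hy)) hsq)
    | inv x _ hx =>
      have hx' : x⁻¹ * δ⁻¹ = (δ ^ 2)⁻¹ * (δ * (x * δ⁻¹)⁻¹ * δ⁻¹) := by group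
      rcases hx with hx | hx
      · exact .inl (inv_mem hx)
      · exact .inr (by rw [hx', hconj _ (inv_mem hx), inv_inv]; exact mul_mem (inv_mem hsq) hx)
  · rintro (hg | hg)
    · exact Subgroup.subset_closure (.inl hg)
    · rw [← inv_mul_cancel_right g δ]
      exact mul_mem (Subgroup.subset_closure (.inl hg)) (Subgroup.subset_closure (.inr rfl))

theorem mem_centralizer_singleton_iff_sq_eq_one
    (hconj : ∀ h ∈ H, δ * h * δ⁻¹ = h⁻¹) {h : G} (hh : h ∈ H) :
    h ∈ Subgroup.centralizer {δ} ↔ h ^ 2 = 1 := by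
  rw [Subgroup.mem_centralizer_singleton_iff, pow_two, mul_eq_one_iff_eq_inv, ← hconj h hh,
    eq_mul_inv_iff_mul_eq]

theorem mem_centralizer_inf_closure_iff_of_conj_eq_inv
    (hconj : ∀ h ∈ H, δ * h * δ⁻¹ = h⁻¹) (hsq : δ ^ 2 ∈ H) {g : G} :
    g ∈ Subgroup.centralizer {δ} ⊓ Subgroup.closure ((H : Set G) ∪ {δ}) ↔
      ∃ h ∈ H, h ^ 2 = 1 ∧ (g = h ∨ g = h * δ) := by
  have hδ : δ ∈ Subgroup.centralizer {δ} := Subgroup.mem_centralizer_singleton_iff.2 rfl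
  rw [Subgroup.mem_inf, mem_closure_union_singleton_of_conj_eq_inv hconj hsq]
  constructor
  · rintro ⟨hc, hg | hg⟩
    · exact ⟨g, hg, (mem_centralizer_singleton_iff_sq_eq_one hconj hg).1 hc, .inl rfl⟩
    · refine ⟨g * δ⁻¹, hg, ?_, .inr (by group)⟩
      exact (mem_centralizer_singleton_iff_sq_eq_one hconj hg).1 (mul_mem hc (inv_mem hδ))
  · rintro ⟨h, hh, h2, rfl | rfl⟩
    · exact ⟨(mem_centralizer_singleton_iff_sq_eq_one hconj hh).2 h2, .inl hh⟩
    · exact ⟨mul_mem ((mem_centralizer_singleton_iff_sq_eq_one hconj hh).2 h2) hδ,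
        .inr (by simpa using hh)⟩

end InvertingElement

section ZModPow

variable {G : Type*} [Monoid G] {m n : ℕ} [NeZero m] [NeZero n] {a b : G}

theorem pow_zmod_val_eq_one_iff (hb : orderOf b = n) {j : ZMod n} : b ^ j.val = 1 ↔ j = 0 := by
  rw [← orderOf_dvd_iff_pow_eq_one, hb, ← ZMod.val_eq_zero]
  exact ⟨fun h ↦ Nat.eq_zero_of_dvd_of_lt h (ZMod.val_lt j), fun h ↦ h ▸ dvd_zero n⟩

variable (n) in
def zmodPowHom (b : G) (hb : b ^ n = 1) : Multiplicative (ZMod n) →* G where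
  toFun j := b ^ j.toAdd.val
  map_one' := by simp
  map_mul' j k := by rw [toAdd_mul, ZMod.val_add, ← pow_eq_pow_mod _ hb, pow_add]

theorem injective_noncommCoprod_zmodPowHom {H : Type*} [Monoid H] (ha : a ^ m = 1)
    (hb : b ^ n = 1) (hab : Commute a b) (ψ : G →* H) (hψa : orderOf (ψ a) = m)
    (hψb : ψ b = 1) (hb' : orderOf b = n) :
    Function.Injective ((zmodPowHom m a ha).noncommCoprod (zmodPowHom n b hb)
      fun _ _ ↦ hab.pow_pow _ _) := by
  rw [injective_iff_map_eq_one]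
  rintro ⟨j, k⟩ h
  change a ^ j.toAdd.val * b ^ k.toAdd.val = 1 at h
  have hj : j = 1 := by
    simpa [hψb, pow_zmod_val_eq_one_iff hψa] using congrArg ψ h
  subst hj
  have hk : k = 1 := by
    simpa [pow_zmod_val_eq_one_iff hb'] using h
  exact Prod.ext rfl hk

end ZModPow

open Matrix

section Matrices

variable (K : Type*) [Field K]

def diagonalTorus : Subgroup (SpecialLinearGroup (Fin 2) K) where
  carrier := {A | ∃ z : K, z ≠ 0 ∧ (A : Matrix (Fin 2) (Fin 2) K) = diagonal ![z, z⁻¹]}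
  mul_mem' := by
    rintro A B ⟨z, hz, hA⟩ ⟨y, hy, hB⟩
    refine ⟨z * y, mul_ne_zero hz hy, ?_⟩
    change A.1 * B.1 = _
    rw [hA, hB, diagonal_mul_diagonal, mul_inv]
    congr 1; ext i; fin_cases i <;> rfl
  one_mem' := ⟨1, one_ne_zero, by rw [inv_one, diagonal_vec2, ← one_fin_two]; rfl⟩
  inv_mem' := by
    rintro A ⟨z, hz, hA⟩
    refine ⟨z⁻¹, inv_ne_zero hz, ?_⟩
    change adjugate A.1 = _
    rw [hA, diagonal_vec2, diagonal_vec2, adjugate_fin_two_of, inv_inv]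
    simp

def specialOrthogonalSubgroup (n : Type*) [Fintype n] [DecidableEq n] :
    Subgroup (orthogonalGroup n K) :=
  (detMonoidHom.comp (orthogonalGroup n K).subtype).ker

variable {K}

theorem mem_diagonalTorus_and_sq_eq_one_iff {A : SpecialLinearGroup (Fin 2) K} :
    A ∈ diagonalTorus K ∧ A ^ 2 = 1 ↔
      (A : Matrix (Fin 2) (Fin 2) K) = 1 ∨ (A : Matrix (Fin 2) (Fin 2) K) = -1 := by
  have hneg : (-1 : Matrix (Fin 2) (Fin 2) K) = diagonal ![-1, (-1)⁻¹] := by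
    rw [inv_neg, inv_one, diagonal_vec2]; ext i j; fin_cases i <;> fin_cases j <;> simp
  constructor
  · rintro ⟨⟨z, hz, hA⟩, hA2⟩
    have hz2 : z * z = 1 := by
      simpa [pow_two, hA, diagonal_vec2, mul_fin_two] using
        congrArg (fun B : SpecialLinearGroup (Fin 2) K ↦ B.1 0 0) hA2
    rcases mul_self_eq_one_iff.1 hz2 with rfl | rfl
    · left; rw [hA, inv_one, diagonal_vec2, one_fin_two]
    · right; rw [hA, hneg]
  · intro hA
    refine ⟨?_, Subtype.ext ?_⟩
    · rcases hA with hA | hA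
      · exact ⟨1, one_ne_zero, by rw [hA, inv_one, diagonal_vec2, one_fin_two]⟩
      · exact ⟨-1, neg_ne_zero.2 one_ne_zero, by rw [hA, hneg]⟩
    · change A.1 ^ 2 = 1
      rcases hA with hA | hA <;> simp [hA]

theorem mem_specialOrthogonalSubgroup_and_sq_eq_one_iff (hK : ringChar K ≠ 2)
    {A : orthogonalGroup (Fin 2) K} :
    A ∈ specialOrthogonalSubgroup K (Fin 2) ∧ A ^ 2 = 1 ↔
      (A : Matrix (Fin 2) (Fin 2) K) = 1 ∨ (A : Matrix (Fin 2) (Fin 2) K) = -1 := by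
  constructor
  · rintro ⟨hdet, hA2⟩
    obtain ⟨h0, h1, h2⟩ := mem_specialOrthogonalGroup_fin_two_iff.1 ⟨A.2, hdet⟩
    have hsymm : A.1 = A.1ᵀ := congrArg Subtype.val (mul_eq_one_iff_eq_inv.1 (pow_two A ▸ hA2))
    have h10 : A.1 1 0 = 0 := by
      have h := congrFun (congrFun hsymm 0) 1
      rwa [transpose_apply, h1, Ring.eq_self_iff_eq_zero_of_char_ne_two hK] at h
    rw [h1, h10, neg_zero] at h2
    have ha : A.1 0 0 * A.1 0 0 = 1 := by linear_combination h2
    rw [eta_fin_two A.1, ← h0, h1, h10, neg_zero]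
    rcases mul_self_eq_one_iff.1 ha with ha | ha <;> rw [ha]
    · exact .inl one_fin_two.symm
    · right; ext i j; fin_cases i <;> fin_cases j <;> simp
  · intro hA
    refine ⟨?_, Subtype.ext ?_⟩
    · change A.1.det = 1
      rcases hA with hA | hA <;> simp [hA, det_neg]
    · change A.1 ^ 2 = 1
      rcases hA with hA | hA <;> simp [hA]

theorem conj_eq_inv_of_mem_diagonalTorus {w d : SpecialLinearGroup (Fin 2) K}
    (hw : (w : Matrix (Fin 2) (Fin 2) K) = !![0, 1; -1, 0]) (hd : d ∈ diagonalTorus K) :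
    w * d * w⁻¹ = d⁻¹ := by
  obtain ⟨z, -, hd⟩ := hd
  apply Subtype.ext
  change w.1 * d.1 * adjugate w.1 = adjugate d.1
  rw [hw, hd, diagonal_vec2, adjugate_fin_two_of, adjugate_fin_two_of, mul_fin_two, mul_fin_two]
  simp

theorem conj_eq_inv_of_mem_specialOrthogonal {r s : orthogonalGroup (Fin 2) K}
    (hr : (r : Matrix (Fin 2) (Fin 2) K) = diagonal ![1, -1])
    (hs : s ∈ specialOrthogonalSubgroup K (Fin 2)) : r * s * r⁻¹ = s⁻¹ := by
  apply Subtype.ext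
  change r.1 * s.1 * r.1ᵀ = s.1ᵀ
  obtain ⟨h0, h1, -⟩ := mem_specialOrthogonalGroup_fin_two_iff.1 ⟨s.2, hs⟩
  rw [hr, diagonal_transpose, diagonal_vec2, eta_fin_two s.1, h0, h1, mul_fin_two, mul_fin_two]
  ext i j; fin_cases i <;> fin_cases j <;> simp

end Matrices

section DeltaCentralizer

variable {K : Type*} [Field K]

def torusProdSO (K : Type*) [Field K] :
    Subgroup (SpecialLinearGroup (Fin 2) K × orthogonalGroup (Fin 2) K) :=
  (diagonalTorus K).prod (specialOrthogonalSubgroup K (Fin 2))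

theorem mem_torusProdSO_and_sq_eq_one_iff (hK : ringChar K ≠ 2)
    {x : SpecialLinearGroup (Fin 2) K × orthogonalGroup (Fin 2) K} :
    x ∈ torusProdSO K ∧ x ^ 2 = 1 ↔
      ((x.1 : Matrix (Fin 2) (Fin 2) K) = 1 ∨ (x.1 : Matrix (Fin 2) (Fin 2) K) = -1) ∧
      ((x.2 : Matrix (Fin 2) (Fin 2) K) = 1 ∨ (x.2 : Matrix (Fin 2) (Fin 2) K) = -1) := by
  rw [← mem_diagonalTorus_and_sq_eq_one_iff,
    ← mem_specialOrthogonalSubgroup_and_sq_eq_one_iff hK, torusProdSO, Subgroup.mem_prod,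
    Prod.ext_iff, Prod.pow_fst, Prod.pow_snd]
  tauto

variable {w : SpecialLinearGroup (Fin 2) K} {r : orthogonalGroup (Fin 2) K}

theorem coe_sq_eq_neg_one_of_coe_eq (hw : (w : Matrix (Fin 2) (Fin 2) K) = !![0, 1; -1, 0]) :
    ((w ^ 2 : SpecialLinearGroup (Fin 2) K) : Matrix (Fin 2) (Fin 2) K) = -1 := by
  change w.1 ^ 2 = -1
  rw [hw, sq, mul_fin_two]
  ext i j; fin_cases i <;> fin_cases j <;> simp

theorem coe_sq_eq_one_of_coe_eq (hr : (r : Matrix (Fin 2) (Fin 2) K) = diagonal ![1, -1]) :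
    ((r ^ 2 : orthogonalGroup (Fin 2) K) : Matrix (Fin 2) (Fin 2) K) = 1 := by
  change r.1 ^ 2 = 1
  rw [hr, diagonal_pow]
  ext i j; fin_cases i <;> fin_cases j <;> simp

theorem conj_eq_inv_of_mem_torusProdSO (hw : (w : Matrix (Fin 2) (Fin 2) K) = !![0, 1; -1, 0])
    (hr : (r : Matrix (Fin 2) (Fin 2) K) = diagonal ![1, -1]) {p} (hp : p ∈ torusProdSO K) :
    (w, r) * p * (w, r)⁻¹ = p⁻¹ := by
  exact Prod.ext (conj_eq_inv_of_mem_diagonalTorus hw hp.1)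
    (conj_eq_inv_of_mem_specialOrthogonal hr hp.2)

theorem mem_centralizer_inf_closure_torusProdSO_iff (hK : ringChar K ≠ 2)
    (hw : (w : Matrix (Fin 2) (Fin 2) K) = !![0, 1; -1, 0])
    (hr : (r : Matrix (Fin 2) (Fin 2) K) = diagonal ![1, -1])
    {g : SpecialLinearGroup (Fin 2) K × orthogonalGroup (Fin 2) K} :
    g ∈ Subgroup.centralizer {(w, r)} ⊓
        Subgroup.closure ((torusProdSO K : Set _) ∪ {(w, r)}) ↔
      ∃ (x : SpecialLinearGroup (Fin 2) K × orthogonalGroup (Fin 2) K) (k : ℕ), k < 2 ∧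
        ((x.1 : Matrix (Fin 2) (Fin 2) K) = 1 ∨ (x.1 : Matrix (Fin 2) (Fin 2) K) = -1) ∧
        ((x.2 : Matrix (Fin 2) (Fin 2) K) = 1 ∨ (x.2 : Matrix (Fin 2) (Fin 2) K) = -1) ∧
        g = x * (w, r) ^ k := by
  have hsq : (w, r) ^ 2 ∈ torusProdSO K :=
    ((mem_torusProdSO_and_sq_eq_one_iff hK).2
      ⟨.inr (coe_sq_eq_neg_one_of_coe_eq hw), .inl (coe_sq_eq_one_of_coe_eq hr)⟩).1
  rw [mem_centralizer_inf_closure_iff_of_conj_eq_inv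
    (fun _ ↦ conj_eq_inv_of_mem_torusProdSO hw hr) hsq]
  constructor
  · rintro ⟨x, hx, hx2, hg⟩
    obtain ⟨hx1, hx2⟩ := (mem_torusProdSO_and_sq_eq_one_iff hK).1 ⟨hx, hx2⟩
    rcases hg with hg | hg
    · exact ⟨x, 0, two_pos, hx1, hx2, by simpa using hg⟩
    · exact ⟨x, 1, one_lt_two, hx1, hx2, by simpa using hg⟩
  · rintro ⟨x, k, hk, hx1, hx2, rfl⟩
    obtain ⟨hx, hx2⟩ := (mem_torusProdSO_and_sq_eq_one_iff hK).2 ⟨hx1, hx2⟩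
    interval_cases k
    · exact ⟨x, hx, hx2, .inl (by simp)⟩
    · exact ⟨x, hx, hx2, .inr (by simp)⟩

theorem centralizer_inf_closure_torusProdSO_eq (hK : ringChar K ≠ 2)
    (hw : (w : Matrix (Fin 2) (Fin 2) K) = !![0, 1; -1, 0])
    (hr : (r : Matrix (Fin 2) (Fin 2) K) = diagonal ![1, -1]) :
    Subgroup.centralizer {(w, r)} ⊓ Subgroup.closure ((torusProdSO K : Set _) ∪ {(w, r)}) =
      Subgroup.closure {(w, r), (1, -1)} := by
  apply le_antisymm
  · intro g hg
    obtain ⟨x, k, -, hx1, hx2, rfl⟩ :=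
      (mem_centralizer_inf_closure_torusProdSO_iff hK hw hr).1 hg
    have hδ : (w, r) ∈ Subgroup.closure {(w, r), (1, -1)} := Subgroup.subset_closure (by simp)
    have hε : (1, -1) ∈ Subgroup.closure {(w, r), (1, -1)} := Subgroup.subset_closure (by simp)
    have hδ2 : (w, r) ^ 2 = (w ^ 2, 1) := Prod.ext rfl (Subtype.ext (coe_sq_eq_one_of_coe_eq hr))
    have hx1' : x.1 = 1 ∨ x.1 = w ^ 2 :=
      hx1.imp Subtype.ext (fun h ↦ Subtype.ext (h.trans (coe_sq_eq_neg_one_of_coe_eq hw).symm))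
    have hx2' : x.2 = 1 ∨ x.2 = -1 := hx2.imp Subtype.ext Subtype.ext
    refine mul_mem ?_ (pow_mem hδ k)
    rw [show x = (x.1, 1) * (1, x.2) by simp]
    refine mul_mem ?_ ?_
    · rcases hx1' with h | h
      · rw [h]; exact one_mem _
      · exact h ▸ hδ2 ▸ pow_mem hδ 2
    · rcases hx2' with h | h
      · rw [h]; exact one_mem _
      · exact h ▸ hε
  · rw [Subgroup.closure_le]
    rintro _ (rfl | rfl)
    · exact (mem_centralizer_inf_closure_torusProdSO_iff hK hw hr).2
        ⟨1, 1, one_lt_two, .inl rfl, .inl rfl, by simp⟩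
    · exact (mem_centralizer_inf_closure_torusProdSO_iff hK hw hr).2
        ⟨(1, -1), 0, two_pos, .inl rfl, .inr rfl, by simp⟩

theorem nonempty_closure_mulEquiv_zmod_four_prod_zmod_two (hK : ringChar K ≠ 2)
    (hw : (w : Matrix (Fin 2) (Fin 2) K) = !![0, 1; -1, 0])
    (hr : (r : Matrix (Fin 2) (Fin 2) K) = diagonal ![1, -1]) :
    Nonempty (Subgroup.closure {(w, r), (1, -1)} ≃*
      Multiplicative (ZMod 4) × Multiplicative (ZMod 2)) := by
  have hneg : (-1 : Matrix (Fin 2) (Fin 2) K) ≠ 1 := fun h ↦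
    Ring.neg_one_ne_one_of_char_ne_two hK (by simpa using congrFun (congrFun h 0) 0)
  have hw2 : w ^ 2 ≠ 1 := fun h ↦
    hneg ((coe_sq_eq_neg_one_of_coe_eq hw).symm.trans (congrArg Subtype.val h))
  have hw4 : w ^ 4 = 1 := by
    rw [show 4 = 2 * 2 from rfl, pow_mul]
    exact Subtype.ext <| by
      change (w ^ 2).1 ^ 2 = 1
      rw [coe_sq_eq_neg_one_of_coe_eq hw, neg_one_sq]
  have hr4 : r ^ 4 = 1 := by
    rw [show 4 = 2 * 2 from rfl, pow_mul,
      show r ^ 2 = 1 from Subtype.ext (coe_sq_eq_one_of_coe_eq hr), one_pow]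
  have hδ4 : (w, r) ^ 4 = 1 := Prod.ext hw4 hr4
  set ε : SpecialLinearGroup (Fin 2) K × orthogonalGroup (Fin 2) K := (1, -1)
  have hε2 : ε ^ 2 = 1 := by simp [ε]
  have hε1 : ε ≠ 1 := fun h ↦ hneg (congrArg (fun x ↦ x.2.1) h)
  have hcomm : Commute (w, r) ε := (Commute.one_right w).prod (Commute.neg_one_right r)
  let φ := (zmodPowHom 4 _ hδ4).noncommCoprod (zmodPowHom 2 _ hε2) fun _ _ ↦ hcomm.pow_pow _ _
  have hinj : Function.Injective φ :=
    injective_noncommCoprod_zmodPowHom hδ4 hε2 hcomm (MonoidHom.fst _ _)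
      (orderOf_eq_prime_pow (p := 2) (n := 1) hw2 hw4) rfl (orderOf_eq_prime hε2 hε1)
  have hrange : φ.range = Subgroup.closure {(w, r), (1, -1)} := by
    apply le_antisymm
    · rintro _ ⟨⟨j, k⟩, rfl⟩
      exact mul_mem (pow_mem (Subgroup.subset_closure (by simp)) _)
        (pow_mem (Subgroup.subset_closure (by simp [ε])) _)
    · rw [Subgroup.closure_le]
      rintro _ (rfl | rfl)
      · exact ⟨(.ofAdd 1, 1), show (w, r) ^ 1 * ε ^ 0 = (w, r) by simp⟩
      · exact ⟨(1, .ofAdd 1), show (w, r) ^ 0 * ε ^ 1 = ε by simp⟩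
  exact ⟨((MonoidHom.ofInjective hinj).trans (MulEquiv.subgroupCongr hrange)).symm⟩

end DeltaCentralizer

/-- Let `D ⊆ SL(2,ℂ)` be the diagonal torus `{diag(z,z⁻¹)}`, let
`SO(2,ℂ) ⊆ O(2,ℂ)` be the special orthogonal group, let `w = [[0,1],[−1,0]]`,
`r = diag(1,−1)`, `δ = (w,r)`, and let `Γ ≤ SL(2,ℂ) × O(2,ℂ)` be generated by
`D × SO(2,ℂ)` and `δ`. Then (a) `δ² = (−I, I)` and conjugation by `δ` inverts every
element of `D × SO(2,ℂ)`; (b) the centralizer of `δ` in `Γ` is exactly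
`{(±I, ±I)·δᵏ : k = 0,1}`, a group of order 8 isomorphic to `ℤ/4 × ℤ/2`. -/
theorem stmt_12 (w : Matrix.SpecialLinearGroup (Fin 2) ℂ)
    (hw : (w : Matrix (Fin 2) (Fin 2) ℂ) = !![0, 1; -1, 0])
    (r : Matrix.orthogonalGroup (Fin 2) ℂ)
    (hr : (r : Matrix (Fin 2) (Fin 2) ℂ) = Matrix.diagonal ![1, -1]) :
    let Dset : Set (Matrix.SpecialLinearGroup (Fin 2) ℂ) :=
      {A | ∃ z : ℂ, z ≠ 0 ∧ (A : Matrix (Fin 2) (Fin 2) ℂ) = Matrix.diagonal ![z, z⁻¹]}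
    let SO2set : Set (Matrix.orthogonalGroup (Fin 2) ℂ) :=
      {A | ((A : Matrix (Fin 2) (Fin 2) ℂ)).det = 1}
    let δ : Matrix.SpecialLinearGroup (Fin 2) ℂ × Matrix.orthogonalGroup (Fin 2) ℂ := (w, r)
    let Γ : Subgroup (Matrix.SpecialLinearGroup (Fin 2) ℂ × Matrix.orthogonalGroup (Fin 2) ℂ) :=
      Subgroup.closure ((Dset ×ˢ SO2set) ∪ {δ})
    (((δ ^ 2).1 : Matrix (Fin 2) (Fin 2) ℂ) = -1 ∧
      ((δ ^ 2).2 : Matrix (Fin 2) (Fin 2) ℂ) = 1) ∧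
    (∀ p ∈ Dset ×ˢ SO2set, δ * p * δ⁻¹ = p⁻¹) ∧
    ((Subgroup.centralizer {δ} ⊓ Γ : Subgroup
        (Matrix.SpecialLinearGroup (Fin 2) ℂ × Matrix.orthogonalGroup (Fin 2) ℂ)) : Set _) =
      {g | ∃ (x : Matrix.SpecialLinearGroup (Fin 2) ℂ × Matrix.orthogonalGroup (Fin 2) ℂ)
            (k : ℕ), k < 2 ∧
          ((x.1 : Matrix (Fin 2) (Fin 2) ℂ) = 1 ∨ (x.1 : Matrix (Fin 2) (Fin 2) ℂ) = -1) ∧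
          ((x.2 : Matrix (Fin 2) (Fin 2) ℂ) = 1 ∨ (x.2 : Matrix (Fin 2) (Fin 2) ℂ) = -1) ∧
          g = x * δ ^ k} ∧
    Nat.card (Subgroup.centralizer {δ} ⊓ Γ : Subgroup
        (Matrix.SpecialLinearGroup (Fin 2) ℂ × Matrix.orthogonalGroup (Fin 2) ℂ)) = 8 ∧
    Nonempty ((Subgroup.centralizer {δ} ⊓ Γ : Subgroup
        (Matrix.SpecialLinearGroup (Fin 2) ℂ × Matrix.orthogonalGroup (Fin 2) ℂ)) ≃*
      (Multiplicative (ZMod 4) × Multiplicative (ZMod 2))) := by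
  intro Dset SO2set δ Γ
  have hK : ringChar ℂ ≠ 2 := by simp [ringChar.eq_zero]
  have hC := centralizer_inf_closure_torusProdSO_eq hK hw hr
  obtain ⟨e⟩ := nonempty_closure_mulEquiv_zmod_four_prod_zmod_two hK hw hr
  have e' : (Subgroup.centralizer {δ} ⊓ Γ : Subgroup _) ≃* _ :=
    (MulEquiv.subgroupCongr hC).trans e
  refine ⟨⟨coe_sq_eq_neg_one_of_coe_eq hw, coe_sq_eq_one_of_coe_eq hr⟩,
    fun p hp ↦ conj_eq_inv_of_mem_torusProdSO hw hr hp,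
    Set.ext fun g ↦ mem_centralizer_inf_closure_torusProdSO_iff hK hw hr, ?_, ⟨e'⟩⟩
  rw [Nat.card_congr e'.toEquiv]
  simp
end
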